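/- arXiv:2002.06863 — 7 statements merged into one kernel-verified Lean document; each statement's English description precedes it below -/
import Mathlib

section
/- Consider a market with n buyers where buyer i has a k_i-demand valuation, the number of items satisfies |M| = Σ_{i=1}^n k_i, and every optimal allocation allocates all items of M and gives each buyer i exactly k_i items. Then an allocation is legal if and only if it is optimal. -/
open Finset

section Defs

variable {M : Type*} [Fintype M] [DecidableEq M] {ι : Type*} [Fintype ι]

/-- A valuation is monotone. -/
def MonotoneVal (v : Finset M → ℝ) : Prop :=
  ∀ ⦃S T : Finset M⦄, S ⊆ T → v S ≤ v T

/-- Quasi-linear utility of a bundle `S` at prices `p`. -/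
def util (v : Finset M → ℝ) (p : M → ℝ) (S : Finset M) : ℝ :=
  v S - ∑ x ∈ S, p x

/-- `S` is a utility-maximizing bundle for valuation `v` at prices `p`. -/
def InDemand (v : Finset M → ℝ) (p : M → ℝ) (S : Finset M) : Prop :=
  ∀ T : Finset M, util v p T ≤ util v p S

/-- Gross-substitutes valuation. -/
def GrossSubstitutes (v : Finset M → ℝ) : Prop :=
  ∀ p q : M → ℝ, (∀ x, 0 ≤ p x) → (∀ x, 0 ≤ q x) → (∀ x, p x ≤ q x) →
    ∀ A : Finset M, InDemand v p A →
      ∃ B : Finset M, InDemand v q B ∧ ∀ x ∈ A, p x = q x → x ∈ B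

/-- `v` is a `k`-demand (multi-demand) valuation:
`v S` is the maximum of `∑_{x ∈ T} v {x}` over `T ⊆ S` with `|T| ≤ k`. -/
def MultiDemand (v : Finset M → ℝ) (k : ℕ) : Prop :=
  ∀ S : Finset M,
    IsGreatest {t : ℝ | ∃ T ⊆ S, T.card ≤ k ∧ t = ∑ x ∈ T, v {x}} (v S)

/-- `v` is a unit-demand valuation: `v ∅ = 0` and `v S = max_{x ∈ S} v {x}`. -/
def UnitDemand (v : Finset M → ℝ) : Prop :=
  v ∅ = 0 ∧ ∀ S : Finset M, S.Nonempty →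
    IsGreatest {t : ℝ | ∃ x ∈ S, t = v {x}} (v S)

/-- An allocation: a family of pairwise disjoint bundles. -/
def IsAlloc (A : ι → Finset M) : Prop :=
  ∀ i j : ι, i ≠ j → Disjoint (A i) (A j)

/-- Social welfare of an allocation. -/
def SW (v : ι → Finset M → ℝ) (A : ι → Finset M) : ℝ :=
  ∑ i, v i (A i)

/-- An optimal allocation: it maximizes social welfare among allocations. -/
def IsOptimalAlloc (v : ι → Finset M → ℝ) (A : ι → Finset M) : Prop :=
  IsAlloc A ∧ ∀ B : ι → Finset M, IsAlloc B → SW v B ≤ SW v A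

/-- `p` is an optimal dynamic pricing: every demanded bundle of every buyer is
her bundle in some optimal allocation. -/
def IsDynamicPricing (v : ι → Finset M → ℝ) (p : M → ℝ) : Prop :=
  (∀ x, 0 ≤ p x) ∧
  ∀ (i : ι) (S : Finset M), InDemand (v i) p S →
    ∃ A : ι → Finset M, IsOptimalAlloc v A ∧ A i = S

/-- Walrasian equilibrium: every buyer gets a demanded bundle and unallocated
items have price 0. -/
def IsWalrasianEq (v : ι → Finset M → ℝ) (A : ι → Finset M) (p : M → ℝ) : Prop :=
  (∀ x, 0 ≤ p x) ∧ IsAlloc A ∧ (∀ i, InDemand (v i) p (A i)) ∧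
  ∀ x : M, (∀ i, x ∉ A i) → p x = 0

/-- Item `x` is legal for buyer `i`: some optimal allocation gives `x` to `i`. -/
def LegalItem (v : ι → Finset M → ℝ) (i : ι) (x : M) : Prop :=
  ∃ A : ι → Finset M, IsOptimalAlloc v A ∧ x ∈ A i

/-- A bundle `S` is legal for buyer `i`: `|S| = k i` and every item of `S` is legal for `i`. -/
def LegalBundle (v : ι → Finset M → ℝ) (k : ι → ℕ) (i : ι) (S : Finset M) : Prop :=
  S.card = k i ∧ ∀ x ∈ S, LegalItem v i x

/-- A legal allocation: every buyer's bundle is legal for her. -/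
def LegalAlloc (v : ι → Finset M → ℝ) (k : ι → ℕ) (A : ι → Finset M) : Prop :=
  IsAlloc A ∧ ∀ i, LegalBundle v k i (A i)

/-- Submodularity condition (SM). -/
def SMcond (v : Finset M → ℝ) : Prop :=
  ∀ (x y : M) (S : Finset M), x ≠ y → x ∉ S → y ∉ S →
    v S + v (S ∪ {x, y}) ≤ v (S ∪ {x}) + v (S ∪ {y})

/-- Condition (RGP). -/
def RGPcond (v : Finset M → ℝ) : Prop :=
  ∀ (x y z : M) (S : Finset M), x ≠ y → x ≠ z → y ≠ z → x ∉ S → y ∉ S → z ∉ S →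
    v (S ∪ {x}) + v (S ∪ {y, z}) ≤
      max (v (S ∪ {y}) + v (S ∪ {x, z})) (v (S ∪ {z}) + v (S ∪ {x, y}))

/-- Condition (NP-SM) with nonnegative prices. -/
def NPSM (v : Finset M → ℝ) : Prop :=
  ¬ ∃ (p : M → ℝ) (x y : M) (S : Finset M),
      (∀ a, 0 ≤ p a) ∧ x ≠ y ∧ x ∉ S ∧ y ∉ S ∧ 0 < p x ∧ 0 < p y ∧
      InDemand v p S ∧ InDemand v p (S ∪ {x, y}) ∧
      ∀ C : Finset M, InDemand v p C → (C ⊆ S ∨ ∃ T ⊆ S, C = T ∪ {x, y})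

/-- Condition (NP-RGP) with nonnegative prices. -/
def NPRGP (v : Finset M → ℝ) : Prop :=
  ¬ ∃ (p : M → ℝ) (x y z : M) (S : Finset M),
      (∀ a, 0 ≤ p a) ∧ x ≠ y ∧ x ≠ z ∧ y ≠ z ∧ x ∉ S ∧ y ∉ S ∧ z ∉ S ∧
      0 < p x ∧ 0 < p y ∧ 0 < p z ∧
      InDemand v p (S ∪ {x}) ∧ InDemand v p (S ∪ {y, z}) ∧
      ∀ C : Finset M, InDemand v p C →
        ((∃ T ⊆ S, C = T ∪ {x}) ∨ ∃ T ⊆ S, C = T ∪ {y, z})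

end Defs

/-!
On allocations that give every buyer `i` exactly `k i` items a `k`-demand valuation is additive,
so there social welfare is the linear assignment objective `∑ i, ∑ x ∈ A i, v i {x}`, with
maximum `OPT` attained by every optimal allocation. Let `A` be legal, and for every item `x` pick
an optimal allocation `C x` that gives `x` to its owner in `A`.
Then `∑ₓ 1_{C x} - 1_A` is a nonnegative fractional allocation with item sums `m - 1` and buyer
sums `(m - 1) k i`, where `m = |M|`. Splitting buyer `i` into `k i` unit-demand slots turns it,
after scaling, into a doubly stochastic matrix, so by Birkhoff's theorem its value is at most
`(m - 1) OPT`. Its value is `m OPT - SW A`, hence `OPT ≤ SW A`.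
-/

theorem sum_mul_le_of_mem_doublyStochastic {n : Type*} [Fintype n] [DecidableEq n]
    {W : Matrix n n ℝ} {c : ℝ} (hW : ∀ σ : Equiv.Perm n, ∑ x, W x (σ x) ≤ c)
    {D : Matrix n n ℝ} (hD : D ∈ doublyStochastic ℝ n) : ∑ x, ∑ y, D x y * W x y ≤ c := by
  let L : Matrix n n ℝ →ₗ[ℝ] ℝ :=
    { toFun := fun X => ∑ x, ∑ y, X x y * W x y
      map_add' := fun X Y => by simp [add_mul, sum_add_distrib]
      map_smul' := fun a X => by simp [mul_sum, mul_assoc] }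
  rw [← SetLike.mem_coe, doublyStochastic_eq_convexHull_permMatrix] at hD
  obtain ⟨_, ⟨σ, rfl⟩, hσ⟩ :=
    (L.convexOn convex_univ).exists_ge_of_mem_convexHull (Set.subset_univ _) hD
  refine hσ.trans (le_of_eq_of_le ?_ (hW σ))
  simp [L, Equiv.Perm.permMatrix, PEquiv.toMatrix_apply]

section Assignment

variable {M ι : Type*} {k : ι → ℕ}

def IsPerfectAlloc (k : ι → ℕ) (A : ι → Finset M) : Prop :=
  IsAlloc A ∧ ∀ i, #(A i) = k i

def allocMatrix [DecidableEq M] (A : ι → Finset M) : ι → M → ℝ :=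
  fun i x => if x ∈ A i then 1 else 0

theorem allocMatrix_nonneg [DecidableEq M] (A : ι → Finset M) (i : ι) (x : M) :
    0 ≤ allocMatrix A i x := by
  unfold allocMatrix; split_ifs <;> norm_num

theorem sum_allocMatrix [Fintype M] [DecidableEq M] (A : ι → Finset M) (i : ι) :
    ∑ x, allocMatrix A i x = #(A i) := by
  simp [allocMatrix]

theorem isPerfectAlloc_fiber_perm [Fintype M] [DecidableEq ι] {o : M → ι}
    (ho : ∀ i, #{y | o y = i} = k i) (σ : Equiv.Perm M) :
    IsPerfectAlloc k fun i => {x | o (σ x) = i} := by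
  refine ⟨fun i j hij => disjoint_filter.2 fun x _ hi hj => hij (hi ▸ hj), fun i => ?_⟩
  rw [← ho i]
  exact card_equiv σ (by simp)

variable [Fintype M] [Fintype ι]

def linWelfare (w : ι → M → ℝ) (A : ι → Finset M) : ℝ :=
  ∑ i, ∑ x ∈ A i, w i x

def fracWelfare (w : ι → M → ℝ) (Z : ι → M → ℝ) : ℝ :=
  ∑ i, ∑ x, Z i x * w i x

def IsMaxPerfectAlloc (w : ι → M → ℝ) (k : ι → ℕ) (A : ι → Finset M) : Prop :=
  IsPerfectAlloc k A ∧ ∀ P, IsPerfectAlloc k P → linWelfare w P ≤ linWelfare w A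

theorem fracWelfare_allocMatrix [DecidableEq M] (w : ι → M → ℝ) (A : ι → Finset M) :
    fracWelfare w (allocMatrix A) = linWelfare w A := by
  simp only [fracWelfare, linWelfare, allocMatrix, ite_mul, one_mul, zero_mul, sum_ite_mem,
    univ_inter]

theorem IsPerfectAlloc.existsUnique_mem [DecidableEq M] {A : ι → Finset M}
    (hcard : Fintype.card M = ∑ i, k i) (hA : IsPerfectAlloc k A) (x : M) : ∃! i, x ∈ A i := by
  have hcover : univ.biUnion A = univ := by
    apply eq_univ_of_card
    rw [card_biUnion fun i _ j _ hij => hA.1 i j hij, hcard]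
    exact sum_congr rfl fun i _ => hA.2 i
  obtain ⟨i, -, hi⟩ := mem_biUnion.1 (hcover ▸ mem_univ x)
  exact ⟨i, hi, fun j hj => by_contra fun hji => disjoint_left.1 (hA.1 j i hji) hj hi⟩

theorem IsPerfectAlloc.sum_allocMatrix_apply [DecidableEq M] {A : ι → Finset M}
    (hcard : Fintype.card M = ∑ i, k i) (hA : IsPerfectAlloc k A) (x : M) :
    ∑ i, allocMatrix A i x = 1 := by
  obtain ⟨i, hi, huniq⟩ := hA.existsUnique_mem hcard x
  rw [Fintype.sum_eq_single i fun j hji =>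
    show allocMatrix A j x = 0 from if_neg fun hj => hji (huniq j hj)]
  exact if_pos hi

theorem linWelfare_fiber_perm [DecidableEq ι] (w : ι → M → ℝ) (o : M → ι)
    (σ : Equiv.Perm M) : linWelfare w (fun i => {x | o (σ x) = i}) = ∑ x, w (o (σ x)) x := by
  rw [linWelfare, ← sum_fiberwise univ (o ∘ σ)]
  exact sum_congr rfl fun i _ => sum_congr rfl fun x hx => by rw [← (mem_filter.1 hx).2]; rfl

theorem exists_card_fiber_eq [DecidableEq ι] (hcard : Fintype.card M = ∑ i, k i) :
    ∃ o : M → ι, ∀ i, #{y | o y = i} = k i := by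
  let e : M ≃ Σ i, Fin (k i) := Fintype.equivOfCardEq (by simp [hcard])
  refine ⟨fun y => (e y).1, fun i => ?_⟩
  rw [← Fintype.card_subtype, ← Fintype.card_fin (k i)]
  exact Fintype.card_congr ((e.subtypeEquiv fun _ => Iff.rfl).trans (Equiv.sigmaSubtype i))

theorem sum_div_card_fiber [DecidableEq ι] {o : M → ι} (ho : ∀ i, #{y | o y = i} = k i)
    (g : ι → ℝ) (hg : ∀ i, k i = 0 → g i = 0) : ∑ y, g (o y) / k (o y) = ∑ i, g i := by
  rw [← sum_fiberwise' univ o fun i => g i / k i]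
  refine sum_congr rfl fun i _ => ?_
  rw [sum_const, ho, nsmul_eq_mul]
  rcases eq_or_ne (k i) 0 with hk | hk
  · simp [hg i hk]
  · field_simp

variable [DecidableEq M] [DecidableEq ι] {w : ι → M → ℝ} {c : ℝ}

theorem fracWelfare_le_of_sum_eq_one (hcard : Fintype.card M = ∑ i, k i)
    (hc : ∀ P, IsPerfectAlloc k P → linWelfare w P ≤ c) {Z : ι → M → ℝ}
    (hZ : ∀ i x, 0 ≤ Z i x) (hrow : ∀ x, ∑ i, Z i x = 1) (hcol : ∀ i, ∑ x, Z i x = k i) :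
    fracWelfare w Z ≤ c := by
  obtain ⟨o, ho⟩ := exists_card_fiber_eq hcard
  have hZk : ∀ i x, k i = 0 → Z i x = 0 := fun i x hk =>
    (sum_eq_zero_iff_of_nonneg fun x _ => hZ i x).1 (by rw [hcol, hk, Nat.cast_zero]) x
      (mem_univ x)
  have hko : ∀ y, (k (o y) : ℝ) ≠ 0 := fun y => by
    rw [Nat.cast_ne_zero, ← ho, ← pos_iff_ne_zero, card_pos]
    exact ⟨y, by simp⟩
  -- Buyer `i` is split into the `k i` slots `o⁻¹' {i}`, each receiving an equal share of `Z i`.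
  let D : Matrix M M ℝ := Matrix.of fun x y => Z (o y) x / k (o y)
  have hD : D ∈ doublyStochastic ℝ M := by
    refine mem_doublyStochastic_iff_sum.2
      ⟨fun x y => div_nonneg (hZ _ _) (Nat.cast_nonneg _), fun x => ?_, fun y => ?_⟩
    · rw [← hrow x]
      exact sum_div_card_fiber ho (Z · x) fun i hk => hZk i x hk
    · simp only [D, Matrix.of_apply]
      rw [← sum_div, hcol, div_self (hko y)]
  have hW : ∀ σ : Equiv.Perm M, ∑ x, w (o (σ x)) x ≤ c := fun σ =>
    linWelfare_fiber_perm w o σ ▸ hc _ (isPerfectAlloc_fiber_perm ho σ)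
  calc fracWelfare w Z = ∑ y, (∑ x, Z (o y) x * w (o y) x) / k (o y) :=
        (sum_div_card_fiber ho _ fun i hk =>
          sum_eq_zero fun x _ => by rw [hZk i x hk, zero_mul]).symm
    _ = ∑ x, ∑ y, D x y * w (o y) x := by
        rw [sum_comm]
        simp only [D, Matrix.of_apply, sum_div, div_mul_eq_mul_div]
    _ ≤ c := sum_mul_le_of_mem_doublyStochastic (W := Matrix.of fun x y => w (o y) x) hW hD

theorem fracWelfare_le (hcard : Fintype.card M = ∑ i, k i)
    (hc : ∀ P, IsPerfectAlloc k P → linWelfare w P ≤ c) {Z : ι → M → ℝ}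
    (hZ : ∀ i x, 0 ≤ Z i x) {r : ℝ} (hr : 0 ≤ r) (hrow : ∀ x, ∑ i, Z i x = r)
    (hcol : ∀ i, ∑ x, Z i x = r * k i) : fracWelfare w Z ≤ r * c := by
  rcases hr.eq_or_lt with rfl | hr
  · have hZ0 : ∀ i x, Z i x = 0 := fun i x =>
      (sum_eq_zero_iff_of_nonneg fun i _ => hZ i x).1 (hrow x) i (mem_univ i)
    simp [fracWelfare, hZ0]
  · have h := fracWelfare_le_of_sum_eq_one hcard hc (Z := fun i x => Z i x / r)
      (fun i x => div_nonneg (hZ i x) hr.le)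
      (fun x => by rw [← sum_div, hrow, div_self hr.ne'])
      (fun i => by rw [← sum_div, hcol, mul_div_cancel_left₀ _ hr.ne'])
    simp only [fracWelfare, div_mul_eq_mul_div, ← sum_div] at h
    rwa [div_le_iff₀ hr, mul_comm] at h

theorem IsPerfectAlloc.isMaxPerfectAlloc_of_forall_mem (hcard : Fintype.card M = ∑ i, k i)
    {A : ι → Finset M} (hA : IsPerfectAlloc k A)
    (hlegal : ∀ i, ∀ x ∈ A i, ∃ C, IsMaxPerfectAlloc w k C ∧ x ∈ C i) :
    IsMaxPerfectAlloc w k A := by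
  refine ⟨hA, fun P hP => ?_⟩
  rcases isEmpty_or_nonempty M with hM | ⟨⟨x₀⟩⟩
  · simp [linWelfare, eq_empty_of_isEmpty]
  choose a haA hauniq using hA.existsUnique_mem hcard
  choose C hC hxC using fun x => hlegal (a x) x (haA x)
  set c := linWelfare w (C x₀)
  have hCc : ∀ x, linWelfare w (C x) = c := fun x =>
    le_antisymm ((hC x₀).2 _ (hC x).1) ((hC x).2 _ (hC x₀).1)
  set m := (Fintype.card M : ℝ)
  let X : ι → M → ℝ := fun i y => ∑ x, allocMatrix (C x) i y - allocMatrix A i y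
  have hX : ∀ i y, 0 ≤ X i y := fun i y => by
    have hle : allocMatrix A i y ≤ allocMatrix (C y) i y := by
      by_cases hy : y ∈ A i
      · rw [allocMatrix, allocMatrix, if_pos hy, if_pos (hauniq y i hy ▸ hxC y)]
      · rw [allocMatrix, if_neg hy]
        exact allocMatrix_nonneg _ _ _
    exact sub_nonneg.2 (hle.trans (single_le_sum (fun x _ => allocMatrix_nonneg _ i y)
      (mem_univ y)))
  have hrow : ∀ y, ∑ i, X i y = m - 1 := fun y => by
    simp only [X, sum_sub_distrib]
    rw [sum_comm, hA.sum_allocMatrix_apply hcard y]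
    simp [fun x => (hC x).1.sum_allocMatrix_apply hcard y, m]
  have hcol : ∀ i, ∑ y, X i y = (m - 1) * k i := fun i => by
    simp only [X, sum_sub_distrib]
    rw [sum_comm, sum_allocMatrix, hA.2]
    simp [sum_allocMatrix, fun x => (hC x).1.2 i, m, sub_mul]
  have hval : fracWelfare w X = m * c - linWelfare w A := by
    have hsplit : fracWelfare w X =
        ∑ x, fracWelfare w (allocMatrix (C x)) - fracWelfare w (allocMatrix A) := by
      simp only [fracWelfare, X, sub_mul, sum_mul, sum_sub_distrib]
      rw [(sum_congr rfl fun i _ => sum_comm).trans sum_comm]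
    simp [hsplit, fracWelfare_allocMatrix, hCc, m]
  have hm : (0 : ℝ) ≤ m - 1 := sub_nonneg.2 (Nat.one_le_cast.2 (Fintype.card_pos_iff.2 ⟨x₀⟩))
  have hX_le := fracWelfare_le hcard (fun P hP => hCc x₀ ▸ (hC x₀).2 P hP) hX hm hrow hcol
  linarith [(hC x₀).2 P hP]

end Assignment

section Market

variable {M ι : Type*}

theorem MultiDemand.singleton_nonneg {v : Finset M → ℝ} {k : ℕ} (hv : MultiDemand v k) (x : M) :
    0 ≤ v {x} :=
  (hv {x}).2 ⟨∅, empty_subset _, by simp, by simp⟩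

theorem MultiDemand.eq_sum_of_card_le {v : Finset M → ℝ} {k : ℕ} (hv : MultiDemand v k)
    {S : Finset M} (hS : #S ≤ k) : v S = ∑ x ∈ S, v {x} := by
  obtain ⟨T, hTS, -, hT⟩ := (hv S).1
  refine le_antisymm ?_ ((hv S).2 ⟨S, Subset.rfl, hS, rfl⟩)
  rw [hT]
  exact sum_le_sum_of_subset_of_nonneg hTS fun x _ _ => hv.singleton_nonneg x

theorem SW_eq_linWelfare [Fintype M] [Fintype ι] {v : ι → Finset M → ℝ} {k : ι → ℕ}
    (hmd : ∀ i, MultiDemand (v i) (k i)) {A : ι → Finset M} (hA : IsPerfectAlloc k A) :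
    SW v A = linWelfare (fun i x => v i {x}) A :=
  sum_congr rfl fun i _ => (hmd i).eq_sum_of_card_le (hA.2 i).le

theorem exists_isOptimalAlloc [Fintype M] [Fintype ι]
    (v : ι → Finset M → ℝ) : ∃ A, IsOptimalAlloc v A := by
  classical
  obtain ⟨A, hA, hmax⟩ := exists_max_image {A : ι → Finset M | IsAlloc A} (SW v)
    ⟨fun _ => ∅, mem_filter.2 ⟨mem_univ _, fun i j _ => disjoint_empty_left _⟩⟩
  exact ⟨A, (mem_filter.1 hA).2, fun B hB => hmax B (by simpa using hB)⟩

end Market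

theorem legal_iff_optimal_general
    {M : Type*} [Fintype M] [DecidableEq M] {n : ℕ}
    (v : Fin n → Finset M → ℝ) (k : Fin n → ℕ)
    (hmd : ∀ i, MultiDemand (v i) (k i))
    (hcard : Fintype.card M = ∑ i, k i)
    (hopt : ∀ A : Fin n → Finset M, IsOptimalAlloc v A →
      (∀ x : M, ∃ i, x ∈ A i) ∧ ∀ i, (A i).card = k i)
    (A : Fin n → Finset M) :
    LegalAlloc v k A ↔ IsOptimalAlloc v A := by
  have hmax : ∀ C, IsOptimalAlloc v C → IsMaxPerfectAlloc (fun i x => v i {x}) k C :=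
    fun C hC => by
      have hCp : IsPerfectAlloc k C := ⟨hC.1, (hopt C hC).2⟩
      refine ⟨hCp, fun P hP => ?_⟩
      rw [← SW_eq_linWelfare hmd hP, ← SW_eq_linWelfare hmd hCp]
      exact hC.2 P hP.1
  constructor
  · rintro ⟨hA, hlegal⟩
    have hAmax : IsMaxPerfectAlloc (fun i x => v i {x}) k A :=
      IsPerfectAlloc.isMaxPerfectAlloc_of_forall_mem hcard ⟨hA, fun i => (hlegal i).1⟩
        fun i x hx => (hlegal i).2 x hx |>.imp fun C hC => ⟨hmax C hC.1, hC.2⟩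
    obtain ⟨B, hB⟩ := exists_isOptimalAlloc v
    refine ⟨hA, fun P hP => (hB.2 P hP).trans ?_⟩
    rw [SW_eq_linWelfare hmd (hmax B hB).1, SW_eq_linWelfare hmd hAmax.1]
    exact hAmax.2 B (hmax B hB).1
  · intro hA
    exact ⟨hA.1, fun i => ⟨(hopt A hA).2 i, fun x hx => ⟨A, hA, hx⟩⟩⟩

/-- In a multi-demand market where `|M| = ∑ k i` and every optimal
allocation allocates all items and gives each buyer `i` exactly `k i` items, an
allocation is legal iff it is optimal. -/
theorem legal_iff_optimal
    {M : Type*} [Fintype M] [DecidableEq M] {n : ℕ}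
    (v : Fin n → Finset M → ℝ) (k : Fin n → ℕ)
    (hmono : ∀ i, MonotoneVal (v i)) (hnorm : ∀ i, v i ∅ = 0)
    (hmd : ∀ i, MultiDemand (v i) (k i))
    (hcard : Fintype.card M = ∑ i, k i)
    (hopt : ∀ A : Fin n → Finset M, IsOptimalAlloc v A →
      (∀ x : M, ∃ i, x ∈ A i) ∧ ∀ i, (A i).card = k i)
    (A : Fin n → Finset M) :
    LegalAlloc v k A ↔ IsOptimalAlloc v A :=
  legal_iff_optimal_general v k hmd hcard hopt A
end

section
/- Let v_1,…,v_n be multi-demand valuations on a finite set M, where v_i is k_i-demand. Form the associated unit-demand market on the same item set M with Σ_i k_i buyers, obtained by replacing buyer i with k_i identical unit-demand buyers, each valuing item x at v_i({x}). Then the maximum social welfare over all allocations in the original multi-demand market equals the maximum social welfare over all allocations in the associated unit-demand market. -/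
open Finset

section Aux

lemma exists_greatest_image {α : Type*} [Fintype α] (P : α → Prop) (f : α → ℝ)
    (hne : ∃ a, P a) : ∃ W, IsGreatest {w | ∃ a, P a ∧ f a = w} W := by
  classical
  obtain ⟨a0, ha0⟩ := hne
  set s := (Finset.univ.filter P).image f with hs
  have hsne : s.Nonempty := ⟨f a0, mem_image.2 ⟨a0, by simp [ha0], rfl⟩⟩
  refine ⟨s.max' hsne, ?_, ?_⟩
  · obtain ⟨a, ha, hfa⟩ := mem_image.1 (s.max'_mem hsne)
    exact ⟨a, (mem_filter.1 ha).2, hfa⟩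
  · rintro w ⟨a, ha, rfl⟩
    exact s.le_max' _ (mem_image.2 ⟨a, by simp [ha], rfl⟩)

variable {M : Type*} [Fintype M] [DecidableEq M] {n : ℕ}

lemma md_to_ud (v : Fin n → Finset M → ℝ) (k : Fin n → ℕ)
    (hmd : ∀ i, MultiDemand (v i) (k i))
    (vUD : (Σ i : Fin n, Fin (k i)) → Finset M → ℝ)
    (hUD : ∀ (j : Σ i : Fin n, Fin (k i)) (S : Finset M),
      vUD j S = if h : S.Nonempty then S.sup' h (fun x => v j.1 {x}) else 0)
    (A : Fin n → Finset M) (hA : IsAlloc A) :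
    ∃ B : (Σ i : Fin n, Fin (k i)) → Finset M, IsAlloc B ∧ SW vUD B = SW v A := by
  classical
  have h : ∀ i, ∃ T ⊆ A i, T.card ≤ k i ∧ v i (A i) = ∑ x ∈ T, v i {x} :=
    fun i => (hmd i (A i)).1
  choose T hTsub hTcard hTval using h
  have hemb : ∀ i, ∃ g : {x // x ∈ T i} → Fin (k i), Function.Injective g := by
    intro i
    have hc : Fintype.card {x // x ∈ T i} ≤ Fintype.card (Fin (k i)) := by
      simpa [Fintype.card_coe] using hTcard i
    obtain ⟨g⟩ := Function.Embedding.nonempty_of_card_le hc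
    exact ⟨g, g.injective⟩
  choose g hg using hemb
  set B : (Σ i : Fin n, Fin (k i)) → Finset M :=
    fun j => ((T j.1).attach.filter (fun x => g j.1 x = j.2)).image Subtype.val with hB
  have hBsub : ∀ j, B j ⊆ T j.1 := by
    rintro j x hx
    obtain ⟨a, _, rfl⟩ := mem_image.1 hx
    exact a.2
  have hfib : ∀ (i : Fin n) (c : Fin (k i)),
      vUD ⟨i, c⟩ (B ⟨i, c⟩) = ∑ x ∈ (T i).attach.filter (fun x => g i x = c), v i {↑x} := by
    intro i c
    set F := (T i).attach.filter (fun x => g i x = c) with hF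
    have hcard1 : F.card ≤ 1 := by
      refine Finset.card_le_one.2 ?_
      intro a ha b hb
      have h1 : g i a = c := (mem_filter.1 ha).2
      have h2 : g i b = c := (mem_filter.1 hb).2
      exact hg i (h1.trans h2.symm)
    rcases F.eq_empty_or_nonempty with hE | hNE
    · have : B ⟨i, c⟩ = ∅ := by simp [hB, ← hF, hE]
      rw [this, hUD]
      simp [hE]
    · have hone : F.card = 1 := le_antisymm hcard1 (Finset.card_pos.2 hNE)
      obtain ⟨a, ha⟩ := Finset.card_eq_one.1 hone
      have : B ⟨i, c⟩ = {(a : M)} := by simp [hB, ← hF, ha]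
      rw [this, hUD, ha]
      simp
  refine ⟨B, ?_, ?_⟩
  · rintro ⟨i, c⟩ ⟨i', c'⟩ hne
    by_cases hii : i = i'
    · subst hii
      have hcc : c ≠ c' := by
        intro h; exact hne (by simp [h])
      rw [Finset.disjoint_left]
      intro x hx hx'
      obtain ⟨a, ha, rfl⟩ := mem_image.1 hx
      obtain ⟨b, hb, hab⟩ := mem_image.1 hx'
      have h1 : g i a = c := (mem_filter.1 ha).2
      have h2 : g i b = c' := (mem_filter.1 hb).2
      have : a = b := Subtype.ext hab.symm
      exact hcc (by rw [← h1, this, h2])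
    · exact Disjoint.mono ((hBsub _).trans (hTsub i))
        ((hBsub _).trans (hTsub i')) (hA i i' hii)
  · rw [SW, SW, ← Finset.univ_sigma_univ, Finset.sum_sigma]
    refine Finset.sum_congr rfl ?_
    intro i _
    calc ∑ c : Fin (k i), vUD ⟨i, c⟩ (B ⟨i, c⟩)
        = ∑ c : Fin (k i), ∑ x ∈ (T i).attach.filter (fun x => g i x = c), v i {↑x} := by
          exact Finset.sum_congr rfl fun c _ => hfib i c
      _ = ∑ x ∈ (T i).attach, v i {↑x} :=
          Finset.sum_fiberwise (T i).attach (g i) _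
      _ = ∑ x ∈ T i, v i {x} := Finset.sum_attach (T i) (fun x => v i {x})
      _ = v i (A i) := (hTval i).symm

lemma ud_to_md (v : Fin n → Finset M → ℝ) (k : Fin n → ℕ)
    (hmd : ∀ i, MultiDemand (v i) (k i))
    (vUD : (Σ i : Fin n, Fin (k i)) → Finset M → ℝ)
    (hUD : ∀ (j : Σ i : Fin n, Fin (k i)) (S : Finset M),
      vUD j S = if h : S.Nonempty then S.sup' h (fun x => v j.1 {x}) else 0)
    (B : (Σ i : Fin n, Fin (k i)) → Finset M) (hB : IsAlloc B) :
    ∃ A : Fin n → Finset M, IsAlloc A ∧ SW vUD B ≤ SW v A := by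
  classical
  set A : Fin n → Finset M :=
    fun i => Finset.univ.biUnion (fun c : Fin (k i) => B ⟨i, c⟩) with hAdef
  have hAalloc : IsAlloc A := by
    intro i i' hne
    rw [Finset.disjoint_left]
    intro x hx hx'
    obtain ⟨c, _, hc⟩ := Finset.mem_biUnion.1 hx
    obtain ⟨c', _, hc'⟩ := Finset.mem_biUnion.1 hx'
    have : (⟨i, c⟩ : Σ i, Fin (k i)) ≠ ⟨i', c'⟩ := by
      intro h; exact hne (congrArg Sigma.fst h)
    exact Finset.disjoint_left.1 (hB _ _ this) hc hc'
  refine ⟨A, hAalloc, ?_⟩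
  rw [SW, SW, ← Finset.univ_sigma_univ, Finset.sum_sigma]
  refine Finset.sum_le_sum ?_
  intro i _
  have hx : ∀ c : Fin (k i), ∃ s : Finset M, s ⊆ B ⟨i, c⟩ ∧ s.card ≤ 1 ∧
      vUD ⟨i, c⟩ (B ⟨i, c⟩) = ∑ x ∈ s, v i {x} := by
    intro c
    by_cases h : (B ⟨i, c⟩).Nonempty
    · obtain ⟨x, hxmem, hxv⟩ := Finset.exists_mem_eq_sup' h (fun x => v i {x})
      exact ⟨{x}, by simpa, by simp, by rw [hUD, dif_pos h]; simpa using hxv⟩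
    · exact ⟨∅, by simp, by simp, by rw [hUD, dif_neg h]; simp⟩
  choose s hs1 hs2 hs3 using hx
  have hdisj : ∀ c ∈ (Finset.univ : Finset (Fin (k i))),
      ∀ c' ∈ (Finset.univ : Finset (Fin (k i))), c ≠ c' → Disjoint (s c) (s c') := by
    intro c _ c' _ h
    refine Disjoint.mono (hs1 c) (hs1 c') (hB ⟨i, c⟩ ⟨i, c'⟩ ?_)
    intro he; exact h (by simpa using (Sigma.mk.inj_iff.1 he).2)
  set Ti := Finset.univ.biUnion s with hTi
  have hsub : Ti ⊆ A i := by
    refine Finset.biUnion_subset.2 ?_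
    intro c _
    exact (hs1 c).trans (Finset.subset_biUnion_of_mem (fun c => B ⟨i, c⟩) (mem_univ c))
  have hcard : Ti.card ≤ k i := by
    rw [hTi, Finset.card_biUnion hdisj]
    calc ∑ c, (s c).card ≤ ∑ _c : Fin (k i), 1 := Finset.sum_le_sum fun c _ => hs2 c
      _ = k i := by simp
  have hub := (hmd i (A i)).2 ⟨Ti, hsub, hcard, rfl⟩
  calc ∑ c : Fin (k i), vUD ⟨i, c⟩ (B ⟨i, c⟩)
      = ∑ c : Fin (k i), ∑ x ∈ s c, v i {x} := Finset.sum_congr rfl fun c _ => hs3 c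
    _ = ∑ x ∈ Ti, v i {x} := (Finset.sum_biUnion hdisj).symm
    _ ≤ v i (A i) := hub

end Aux
/-- Splitting each `k i`-demand buyer into `k i` identical
unit-demand buyers preserves the maximum social welfare. -/
theorem multidemand_unitdemand_same_max_welfare
    {M : Type*} [Fintype M] [DecidableEq M] {n : ℕ}
    (v : Fin n → Finset M → ℝ) (k : Fin n → ℕ)
    (hmono : ∀ i, MonotoneVal (v i)) (hnorm : ∀ i, v i ∅ = 0)
    (hmd : ∀ i, MultiDemand (v i) (k i))
    (vUD : (Σ i : Fin n, Fin (k i)) → Finset M → ℝ)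
    (hUD : ∀ (j : Σ i : Fin n, Fin (k i)) (S : Finset M),
      vUD j S = if h : S.Nonempty then S.sup' h (fun x => v j.1 {x}) else 0) :
    ∃ W : ℝ,
      IsGreatest {w : ℝ | ∃ A : Fin n → Finset M, IsAlloc A ∧ SW v A = w} W ∧
      IsGreatest {w : ℝ | ∃ B : (Σ i : Fin n, Fin (k i)) → Finset M,
        IsAlloc B ∧ SW vUD B = w} W := by

  classical
  obtain ⟨W1, hW1⟩ := exists_greatest_image (IsAlloc (ι := Fin n)) (SW v)
    ⟨fun _ => ∅, fun _ _ _ => Finset.disjoint_empty_left _⟩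
  obtain ⟨W2, hW2⟩ := exists_greatest_image (IsAlloc (ι := Σ i : Fin n, Fin (k i))) (SW vUD)
    ⟨fun _ => ∅, fun _ _ _ => Finset.disjoint_empty_left _⟩
  have hle1 : W1 ≤ W2 := by
    obtain ⟨A, hA, hAW⟩ := hW1.1
    obtain ⟨B, hBa, hBW⟩ := md_to_ud v k hmd vUD hUD A hA
    exact hW2.2 ⟨B, hBa, hBW.trans hAW⟩
  have hle2 : W2 ≤ W1 := by
    obtain ⟨B, hBa, hBW⟩ := hW2.1
    obtain ⟨A, hA, hAW⟩ := ud_to_md v k hmd vUD hUD B hBa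
    exact (hBW ▸ hAW).trans (hW1.2 ⟨A, hA, rfl⟩)
  exact ⟨W1, hW1, (le_antisymm hle1 hle2) ▸ hW2⟩
end

section
/- Let O = (O_1,…,O_n) be an optimal allocation in a market with multi-demand buyers (v_i is k_i-demand and |O_i| ≤ k_i for all i). Let x_1,…,x_k be items (not necessarily distinct) with x_ℓ ∈ O_{i_ℓ}, such that consecutive items belong to different buyers, i.e., i_ℓ ≠ i_{ℓ+1} for all ℓ (indices cyclic, x_{k+1} = x_1). Then Σ_{ℓ=1}^{k} ( v_{i_ℓ}({x_ℓ}) − v_{i_ℓ}({x_{ℓ+1}}) ) ≥ 0; that is, every cycle in the preference graph has non-negative weight. -/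
open Finset

section Proof

variable {M : Type*} [Fintype M] [DecidableEq M] {n : ℕ}

lemma single_nonneg' {v : Finset M → ℝ} (hmono : MonotoneVal v) (hnorm : v ∅ = 0)
    (y : M) : 0 ≤ v {y} := hnorm ▸ hmono (Finset.empty_subset {y})

lemma sum_le_val' {v : Finset M → ℝ} {k : ℕ} (hmd : MultiDemand v k)
    {S : Finset M} (hS : S.card ≤ k) : ∑ y ∈ S, v {y} ≤ v S :=
  (hmd S).2 ⟨S, Finset.Subset.refl S, hS, rfl⟩

lemma val_le_sum' {v : Finset M → ℝ} {k : ℕ} (hmd : MultiDemand v k)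
    (hmono : MonotoneVal v) (hnorm : v ∅ = 0) (S : Finset M) :
    v S ≤ ∑ y ∈ S, v {y} := by
  obtain ⟨T, hT, -, heq⟩ := (hmd S).1
  rw [heq]
  exact Finset.sum_le_sum_of_subset_of_nonneg hT fun y _ _ => single_nonneg' hmono hnorm y

lemma cycle_nonneg_inj
    (v : Fin n → Finset M → ℝ) (k : Fin n → ℕ)
    (hmono : ∀ i, MonotoneVal (v i)) (hnorm : ∀ i, v i ∅ = 0)
    (hmd : ∀ i, MultiDemand (v i) (k i))
    (O : Fin n → Finset M) (hO : IsOptimalAlloc v O)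
    (hOk : ∀ i, (O i).card ≤ k i)
    {c : ℕ} (i : Fin (c + 1) → Fin n) (x : Fin (c + 1) → M)
    (hxO : ∀ ℓ, x ℓ ∈ O (i ℓ))
    (hinj : Function.Injective x) :
    0 ≤ ∑ ℓ : Fin (c + 1), (v (i ℓ) {x ℓ} - v (i ℓ) {x (ℓ + 1)}) := by
  classical
  set X : Finset M := Finset.image x Finset.univ with hX
  have howner : ∀ (ℓ : Fin (c+1)) (j : Fin n), x ℓ ∈ O j → i ℓ = j := by
    intro ℓ j h
    by_contra hij
    exact (Finset.disjoint_left.mp (hO.1 _ _ hij) (hxO ℓ)) h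
  set F : Fin n → Finset (Fin (c+1)) := fun j => Finset.univ.filter (fun ℓ => i ℓ = j) with hF
  set N : Fin n → Finset M := fun j => (F j).image (fun ℓ => x (ℓ + 1)) with hN
  set B : Fin n → Finset M := fun j => (O j \ X) ∪ N j with hB
  have hinj1 : Function.Injective (fun ℓ : Fin (c+1) => x (ℓ + 1)) :=
    fun a b h => add_right_cancel (hinj h)
  have hNX : ∀ j, N j ⊆ X := by
    intro j y hy
    simp only [hN, Finset.mem_image] at hy
    obtain ⟨ℓ, -, rfl⟩ := hy
    exact Finset.mem_image_of_mem x (Finset.mem_univ _)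
  have hOX : ∀ j, O j ∩ X = (F j).image x := by
    intro j
    ext y
    simp only [Finset.mem_inter, hX, hF, Finset.mem_image, Finset.mem_filter,
      Finset.mem_univ, true_and]
    constructor
    · rintro ⟨hyO, ℓ, -, rfl⟩
      exact ⟨ℓ, howner ℓ j hyO, rfl⟩
    · rintro ⟨ℓ, hij, rfl⟩
      exact ⟨hij ▸ hxO ℓ, ℓ, rfl⟩
  have hdisjBN : ∀ j, Disjoint (O j \ X) (N j) := fun j =>
    Finset.disjoint_left.mpr fun y hy hy' => (Finset.mem_sdiff.mp hy).2 (hNX j hy')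
  have hBalloc : IsAlloc B := by
    intro j j' hjj'
    rw [Finset.disjoint_left]
    intro y hy hy'
    simp only [hB, Finset.mem_union, Finset.mem_sdiff] at hy hy'
    rcases hy with ⟨hyO, hyX⟩ | hyN
    · rcases hy' with ⟨hyO', -⟩ | hyN'
      · exact Finset.disjoint_left.mp (hO.1 _ _ hjj') hyO hyO'
      · exact hyX (hNX j' hyN')
    · rcases hy' with ⟨-, hyX'⟩ | hyN'
      · exact hyX' (hNX j hyN)
      · simp only [hN, Finset.mem_image, hF, Finset.mem_filter, Finset.mem_univ,
          true_and] at hyN hyN'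
        obtain ⟨ℓ, hℓ, rfl⟩ := hyN
        obtain ⟨ℓ', hℓ', heq⟩ := hyN'
        exact hjj' (hℓ ▸ hℓ' ▸ congrArg i (hinj1 heq.symm))
  have hcardF : ∀ j, (O j ∩ X).card = (F j).card := by
    intro j
    rw [hOX j]
    exact Finset.card_image_of_injective _ hinj
  have hcardB : ∀ j, (B j).card ≤ k j := by
    intro j
    have h1 : (B j).card ≤ (O j \ X).card + (N j).card := Finset.card_union_le _ _
    have h2 : (N j).card = (F j).card := Finset.card_image_of_injective _ hinj1
    have h4 : (O j \ X).card + (O j ∩ X).card = (O j).card :=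
      Finset.card_sdiff_add_card_inter _ _
    have h5 := hcardF j
    have := hOk j
    omega
  have hSW : SW v B ≤ SW v O := hO.2 B hBalloc
  have hBsum : ∀ j, ∑ y ∈ B j, v j {y}
      = ∑ y ∈ O j \ X, v j {y} + ∑ ℓ ∈ F j, v j {x (ℓ+1)} := by
    intro j
    rw [hB]
    rw [Finset.sum_union (hdisjBN j), hN, Finset.sum_image
      (fun a _ b _ h => hinj1 h)]
  have hOsum : ∀ j, ∑ y ∈ O j, v j {y}
      = ∑ y ∈ O j \ X, v j {y} + ∑ ℓ ∈ F j, v j {x ℓ} := by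
    intro j
    have e1 : ∑ y ∈ (F j).image x, v j {y} = ∑ ℓ ∈ F j, v j {x ℓ} :=
      Finset.sum_image (fun a _ b _ h => hinj h)
    rw [← e1, ← hOX j, ← Finset.sdiff_inter_self_left (O j) X,
      Finset.sum_sdiff_eq_sub Finset.inter_subset_left, sub_add_cancel]
  have hOval : ∀ j, v j (O j) = ∑ y ∈ O j, v j {y} := fun j =>
    le_antisymm (val_le_sum' (hmd j) (hmono j) (hnorm j) _)
      (sum_le_val' (hmd j) (hOk j))
  have hBval : ∀ j, ∑ y ∈ B j, v j {y} ≤ v j (B j) := fun j =>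
    sum_le_val' (hmd j) (hcardB j)
  have key : ∑ j, (∑ ℓ ∈ F j, v j {x ℓ} - ∑ ℓ ∈ F j, v j {x (ℓ+1)})
      = ∑ ℓ : Fin (c+1), (v (i ℓ) {x ℓ} - v (i ℓ) {x (ℓ + 1)}) := by
    have : ∀ j, ∑ ℓ ∈ F j, v j {x ℓ} - ∑ ℓ ∈ F j, v j {x (ℓ+1)}
        = ∑ ℓ ∈ F j, (v (i ℓ) {x ℓ} - v (i ℓ) {x (ℓ+1)}) := by
      intro j
      rw [← Finset.sum_sub_distrib]
      refine Finset.sum_congr rfl fun ℓ hℓ => ?_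
      have := (Finset.mem_filter.mp hℓ).2
      rw [this]
    rw [Finset.sum_congr rfl fun j _ => this j]
    exact Finset.sum_fiberwise _ _ _
  have h1 : SW v O = ∑ j, ∑ y ∈ O j, v j {y} :=
    Finset.sum_congr rfl fun j _ => hOval j
  have h2 : ∑ j, ∑ y ∈ B j, v j {y} ≤ SW v B :=
    Finset.sum_le_sum fun j _ => hBval j
  have h3 : ∑ j, ∑ y ∈ O j, v j {y} - ∑ j, ∑ y ∈ B j, v j {y}
      = ∑ ℓ : Fin (c+1), (v (i ℓ) {x ℓ} - v (i ℓ) {x (ℓ + 1)}) := by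
    rw [← key, ← Finset.sum_sub_distrib]
    refine Finset.sum_congr rfl fun j _ => ?_
    rw [hOsum j, hBsum j]
    ring
  have hSWB : SW v B = ∑ j, v j (B j) := rfl
  linarith [hSW, h1, h2, h3]

lemma fin_mk_add_one' {N t s : ℕ} (h1 : t < N + 1) (hs : s < N + 1) (hts : t + 1 = s) :
    (⟨t, h1⟩ : Fin (N+1)) + 1 = ⟨s, hs⟩ := by
  subst hts
  have hN : 0 < N := by omega
  have hone : (1 : Fin (N+1)).val = 1 := by
    rw [Fin.val_one']
    exact Nat.mod_eq_of_lt (by omega)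
  apply Fin.ext
  rw [Fin.val_add, hone]
  exact Nat.mod_eq_of_lt hs

lemma fin_mk_add_one_wrap {N t : ℕ} (h1 : t < N + 1) (ht : t = N) :
    (⟨t, h1⟩ : Fin (N+1)) + 1 = 0 := by
  subst ht
  have : (⟨t, h1⟩ : Fin (t+1)) = Fin.last t := rfl
  rw [this, Fin.last_add_one]

lemma cycle_nonneg_aux
    (v : Fin n → Finset M → ℝ) (k : Fin n → ℕ)
    (hmono : ∀ i, MonotoneVal (v i)) (hnorm : ∀ i, v i ∅ = 0)
    (hmd : ∀ i, MultiDemand (v i) (k i))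
    (O : Fin n → Finset M) (hO : IsOptimalAlloc v O)
    (hOk : ∀ i, (O i).card ≤ k i) :
    ∀ c : ℕ, ∀ (i : Fin (c + 1) → Fin n) (x : Fin (c + 1) → M),
      (∀ ℓ, x ℓ ∈ O (i ℓ)) → (∀ ℓ : Fin (c + 1), i ℓ ≠ i (ℓ + 1)) →
      0 ≤ ∑ ℓ : Fin (c + 1), (v (i ℓ) {x ℓ} - v (i ℓ) {x (ℓ + 1)}) := by
  intro c
  induction c using Nat.strong_induction_on with
  | _ c IH =>
  intro i x hxO hne
  rcases Nat.eq_zero_or_pos c with rfl | hc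
  · exact absurd rfl (hne 0)
  by_cases hinj : Function.Injective x
  · exact cycle_nonneg_inj v k hmono hnorm hmd O hO hOk i x hxO hinj
  rw [Function.not_injective_iff] at hinj
  obtain ⟨a, b, hxab, hab⟩ := hinj
  -- rotate the cycle so that the repeated item sits at position 0
  set i' : Fin (c+1) → Fin n := fun ℓ => i (ℓ + a) with hi'
  set x' : Fin (c+1) → M := fun ℓ => x (ℓ + a) with hx'
  have hrot : ∑ ℓ : Fin (c+1), (v (i' ℓ) {x' ℓ} - v (i' ℓ) {x' (ℓ+1)})
      = ∑ ℓ : Fin (c+1), (v (i ℓ) {x ℓ} - v (i ℓ) {x (ℓ + 1)}) := by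
    refine Fintype.sum_equiv (Equiv.addRight a) _ _ fun ℓ => ?_
    simp only [hi', hx', Equiv.coe_addRight]
    rw [add_right_comm]
  rw [← hrot]
  have hxO' : ∀ ℓ, x' ℓ ∈ O (i' ℓ) := fun ℓ => hxO _
  have hne' : ∀ ℓ : Fin (c+1), i' ℓ ≠ i' (ℓ + 1) := by
    intro ℓ
    show i (ℓ + a) ≠ i (ℓ + 1 + a)
    rw [add_right_comm]
    exact hne (ℓ + a)
  have hx'0 : x' (b - a) = x' 0 := by
    show x (b - a + a) = x (0 + a)
    rw [sub_add_cancel, zero_add]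
    exact hxab.symm
  have hd0 : b - a ≠ 0 := sub_ne_zero.mpr (Ne.symm hab)
  set m := (b - a).val with hm
  have hm0 : 0 < m := Nat.pos_of_ne_zero fun h => hd0 (Fin.ext h)
  have hmc : m ≤ c := Nat.lt_succ_iff.mp (b - a).isLt
  have hmlt : m < c + 1 := Nat.lt_succ_of_le hmc
  have hbm : (⟨m, hmlt⟩ : Fin (c+1)) = b - a := Fin.ext rfl
  have hsame : i' (b - a) = i' 0 := by
    by_contra hcon
    have h0 : x' (b - a) ∈ O (i' 0) := by rw [hx'0]; exact hxO' 0
    exact (Finset.disjoint_left.mp (hO.1 _ _ hcon) (hxO' (b - a))) h0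
  have hsame' : i' ⟨m, hmlt⟩ = i' 0 := by rw [hbm]; exact hsame
  have hx'm : x' ⟨m, hmlt⟩ = x' 0 := by rw [hbm]; exact hx'0
  obtain ⟨c1, hc1⟩ : ∃ c1, m = c1 + 1 := ⟨m - 1, by omega⟩
  obtain ⟨c2, hc2⟩ : ∃ c2, c + 1 - m = c2 + 1 := ⟨c - m, by omega⟩
  have hc2m : m + c2 = c := by omega
  have hle1 : ∀ ℓ : Fin (c1+1), ℓ.val < c + 1 := fun ℓ => by have := ℓ.isLt; omega
  have hle2 : ∀ ℓ : Fin (c2+1), m + ℓ.val < c + 1 := fun ℓ => by have := ℓ.isLt; omega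
  set i1 : Fin (c1+1) → Fin n := fun ℓ => i' ⟨ℓ.val, hle1 ℓ⟩ with hi1
  set x1 : Fin (c1+1) → M := fun ℓ => x' ⟨ℓ.val, hle1 ℓ⟩ with hx1
  set i2 : Fin (c2+1) → Fin n := fun ℓ => i' ⟨m + ℓ.val, hle2 ℓ⟩ with hi2
  set x2 : Fin (c2+1) → M := fun ℓ => x' ⟨m + ℓ.val, hle2 ℓ⟩ with hx2
  have hxO1 : ∀ ℓ, x1 ℓ ∈ O (i1 ℓ) := fun ℓ => hxO' _
  have hxO2 : ∀ ℓ, x2 ℓ ∈ O (i2 ℓ) := fun ℓ => hxO' _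
  have h10 : i1 0 = i' 0 := congrArg i' (Fin.ext (by simp))
  have h20 : i2 0 = i' ⟨m, hmlt⟩ := congrArg i' (Fin.ext (by simp))
  have hx10 : x1 0 = x' 0 := congrArg x' (Fin.ext (by simp))
  have hx20 : x2 0 = x' ⟨m, hmlt⟩ := congrArg x' (Fin.ext (by simp))
  have hne1 : ∀ ℓ : Fin (c1+1), i1 ℓ ≠ i1 (ℓ + 1) := by
    intro ℓ
    rcases eq_or_lt_of_le (Nat.lt_succ_iff.mp ℓ.isLt) with hl | hl
    · -- wrap-around edge
      have hw : ℓ + 1 = (0 : Fin (c1+1)) := by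
        rw [show ℓ = ⟨ℓ.val, ℓ.isLt⟩ from Fin.ext rfl]
        exact fin_mk_add_one_wrap ℓ.isLt hl
      have he : (⟨ℓ.val, hle1 ℓ⟩ : Fin (c+1)) + 1 = ⟨m, hmlt⟩ :=
        fin_mk_add_one' (hle1 ℓ) hmlt (by omega)
      rw [hw, h10, ← hsame']
      show i' ⟨ℓ.val, hle1 ℓ⟩ ≠ i' ⟨m, hmlt⟩
      rw [← he]
      exact hne' _
    · have hq : ℓ.val + 1 < c + 1 := by omega
      have hq1 : ℓ.val + 1 < c1 + 1 := by omega
      have hw : ℓ + 1 = (⟨ℓ.val + 1, hq1⟩ : Fin (c1+1)) :=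
        fin_mk_add_one' ℓ.isLt hq1 rfl
      have he : (⟨ℓ.val, hle1 ℓ⟩ : Fin (c+1)) + 1 = ⟨ℓ.val + 1, hq⟩ :=
        fin_mk_add_one' (hle1 ℓ) hq rfl
      rw [hw]
      show i' ⟨ℓ.val, hle1 ℓ⟩ ≠ i' ⟨ℓ.val + 1, hle1 ⟨ℓ.val + 1, hq1⟩⟩
      rw [show (⟨ℓ.val + 1, hle1 ⟨ℓ.val + 1, hq1⟩⟩ : Fin (c+1)) = ⟨ℓ.val + 1, hq⟩ from rfl, ← he]
      exact hne' _
  have hne2 : ∀ ℓ : Fin (c2+1), i2 ℓ ≠ i2 (ℓ + 1) := by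
    intro ℓ
    rcases eq_or_lt_of_le (Nat.lt_succ_iff.mp ℓ.isLt) with hl | hl
    · have hw : ℓ + 1 = (0 : Fin (c2+1)) := by
        rw [show ℓ = ⟨ℓ.val, ℓ.isLt⟩ from Fin.ext rfl]
        exact fin_mk_add_one_wrap ℓ.isLt hl
      have he : (⟨m + ℓ.val, hle2 ℓ⟩ : Fin (c+1)) + 1 = (0 : Fin (c+1)) :=
        fin_mk_add_one_wrap (hle2 ℓ) (by omega)
      rw [hw, h20, hsame']
      show i' ⟨m + ℓ.val, hle2 ℓ⟩ ≠ i' 0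
      rw [← he]
      exact hne' _
    · have hq : m + ℓ.val + 1 < c + 1 := by omega
      have hq1 : ℓ.val + 1 < c2 + 1 := by omega
      have hw : ℓ + 1 = (⟨ℓ.val + 1, hq1⟩ : Fin (c2+1)) :=
        fin_mk_add_one' ℓ.isLt hq1 rfl
      have he : (⟨m + ℓ.val, hle2 ℓ⟩ : Fin (c+1)) + 1 = ⟨m + ℓ.val + 1, hq⟩ :=
        fin_mk_add_one' (hle2 ℓ) hq rfl
      rw [hw]
      show i' ⟨m + ℓ.val, hle2 ℓ⟩ ≠ i' ⟨m + (ℓ.val + 1), hle2 ⟨ℓ.val + 1, hq1⟩⟩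
      rw [show (⟨m + (ℓ.val + 1), hle2 ⟨ℓ.val + 1, hq1⟩⟩ : Fin (c+1))
        = ⟨m + ℓ.val + 1, hq⟩ from Fin.ext (by simp; omega), ← he]
      exact hne' _
  -- split the sum
  classical
  set G : ℕ → ℝ := fun t =>
    if h : t < c + 1 then v (i' ⟨t, h⟩) {x' ⟨t, h⟩} - v (i' ⟨t, h⟩) {x' (⟨t, h⟩ + 1)}
    else 0 with hG
  have hGsum : ∑ ℓ : Fin (c+1), (v (i' ℓ) {x' ℓ} - v (i' ℓ) {x' (ℓ+1)})
      = ∑ t ∈ Finset.range (c+1), G t := by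
    rw [← Fin.sum_univ_eq_sum_range G (c+1)]
    refine Finset.sum_congr rfl fun ℓ _ => ?_
    rw [hG]
    simp only [ℓ.isLt, dif_pos, Fin.eta]
  have hsplit : ∑ t ∈ Finset.range (c+1), G t
      = ∑ t ∈ Finset.range m, G t + ∑ t ∈ Finset.range (c + 1 - m), G (m + t) := by
    have e1 : ∑ t ∈ Finset.Ico 0 m, G t + ∑ t ∈ Finset.Ico m (c+1), G t
        = ∑ t ∈ Finset.Ico 0 (c+1), G t :=
      Finset.sum_Ico_consecutive G (Nat.zero_le m) (by omega)
    have e2 : ∑ t ∈ Finset.Ico m (c+1), G t = ∑ t ∈ Finset.range (c + 1 - m), G (m + t) :=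
      Finset.sum_Ico_eq_sum_range G m (c+1)
    rw [Finset.range_eq_Ico, ← e1, e2, ← Finset.range_eq_Ico]
  have hS1 : ∑ t ∈ Finset.range m, G t
      = ∑ ℓ : Fin (c1+1), (v (i1 ℓ) {x1 ℓ} - v (i1 ℓ) {x1 (ℓ+1)}) := by
    rw [hc1, ← Fin.sum_univ_eq_sum_range G (c1+1)]
    refine Finset.sum_congr rfl fun ℓ _ => ?_
    have hlt : ℓ.val < c + 1 := hle1 ℓ
    rw [hG]
    simp only [hlt, dif_pos]
    have e1 : i' ⟨ℓ.val, hlt⟩ = i1 ℓ := rfl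
    have e2 : x' ⟨ℓ.val, hlt⟩ = x1 ℓ := rfl
    rw [e1, e2]
    suffices hx : x' ((⟨ℓ.val, hlt⟩ : Fin (c+1)) + 1) = x1 (ℓ + 1) by rw [hx]
    rcases eq_or_lt_of_le (Nat.lt_succ_iff.mp ℓ.isLt) with hl | hl
    · have hw : ℓ + 1 = (0 : Fin (c1+1)) := by
        rw [show ℓ = ⟨ℓ.val, ℓ.isLt⟩ from Fin.ext rfl]
        exact fin_mk_add_one_wrap ℓ.isLt hl
      have he : (⟨ℓ.val, hlt⟩ : Fin (c+1)) + 1 = ⟨m, hmlt⟩ :=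
        fin_mk_add_one' hlt hmlt (by omega)
      rw [hw, he, hx'm, hx10]
    · have hq : ℓ.val + 1 < c + 1 := by omega
      have hq1 : ℓ.val + 1 < c1 + 1 := by omega
      have hw : ℓ + 1 = (⟨ℓ.val + 1, hq1⟩ : Fin (c1+1)) :=
        fin_mk_add_one' ℓ.isLt hq1 rfl
      have he : (⟨ℓ.val, hlt⟩ : Fin (c+1)) + 1 = ⟨ℓ.val + 1, hq⟩ :=
        fin_mk_add_one' hlt hq rfl
      rw [hw, he]
  have hS2 : ∑ t ∈ Finset.range (c + 1 - m), G (m + t)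
      = ∑ ℓ : Fin (c2+1), (v (i2 ℓ) {x2 ℓ} - v (i2 ℓ) {x2 (ℓ+1)}) := by
    rw [hc2, ← Fin.sum_univ_eq_sum_range (fun t => G (m + t)) (c2+1)]
    refine Finset.sum_congr rfl fun ℓ _ => ?_
    have hlt : m + ℓ.val < c + 1 := hle2 ℓ
    show G (m + ℓ.val) = _
    rw [hG]
    simp only [hlt, dif_pos]
    have e1 : i' ⟨m + ℓ.val, hlt⟩ = i2 ℓ := rfl
    have e2 : x' ⟨m + ℓ.val, hlt⟩ = x2 ℓ := rfl
    rw [e1, e2]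
    suffices hx : x' ((⟨m + ℓ.val, hlt⟩ : Fin (c+1)) + 1) = x2 (ℓ + 1) by rw [hx]
    rcases eq_or_lt_of_le (Nat.lt_succ_iff.mp ℓ.isLt) with hl | hl
    · have hw : ℓ + 1 = (0 : Fin (c2+1)) := by
        rw [show ℓ = ⟨ℓ.val, ℓ.isLt⟩ from Fin.ext rfl]
        exact fin_mk_add_one_wrap ℓ.isLt hl
      have he : (⟨m + ℓ.val, hlt⟩ : Fin (c+1)) + 1 = (0 : Fin (c+1)) :=
        fin_mk_add_one_wrap hlt (by omega)
      rw [hw, he, hx20, hx'm]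
    · have hq : m + ℓ.val + 1 < c + 1 := by omega
      have hq1 : ℓ.val + 1 < c2 + 1 := by omega
      have hw : ℓ + 1 = (⟨ℓ.val + 1, hq1⟩ : Fin (c2+1)) :=
        fin_mk_add_one' ℓ.isLt hq1 rfl
      have he : (⟨m + ℓ.val, hlt⟩ : Fin (c+1)) + 1 = ⟨m + ℓ.val + 1, hq⟩ :=
        fin_mk_add_one' hlt hq rfl
      rw [hw, he]
      show x' ⟨m + ℓ.val + 1, hq⟩ = x' ⟨m + (ℓ.val + 1), hle2 ⟨ℓ.val + 1, hq1⟩⟩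
      exact congrArg x' (Fin.ext (by simp; omega))
  rw [hGsum, hsplit, hS1, hS2]
  exact add_nonneg (IH c1 (by omega) i1 x1 hxO1 hne1) (IH c2 (by omega) i2 x2 hxO2 hne2)

end Proof

/-- Every cycle in the preference graph of an optimal allocation
has non-negative weight. -/
theorem preference_cycle_nonneg
    {M : Type*} [Fintype M] [DecidableEq M] {n : ℕ}
    (v : Fin n → Finset M → ℝ) (k : Fin n → ℕ)
    (hmono : ∀ i, MonotoneVal (v i)) (hnorm : ∀ i, v i ∅ = 0)
    (hmd : ∀ i, MultiDemand (v i) (k i))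
    (O : Fin n → Finset M) (hO : IsOptimalAlloc v O)
    (hOk : ∀ i, (O i).card ≤ k i)
    {c : ℕ} (i : Fin (c + 1) → Fin n) (x : Fin (c + 1) → M)
    (hxO : ∀ ℓ, x ℓ ∈ O (i ℓ))
    (hne : ∀ ℓ : Fin (c + 1), i ℓ ≠ i (ℓ + 1)) :
    0 ≤ ∑ ℓ : Fin (c + 1), (v (i ℓ) {x ℓ} - v (i ℓ) {x (ℓ + 1)}) := by
  exact cycle_nonneg_aux v k hmono hnorm hmd O hO hOk c i x hxO hne
end

section
/- Let O = (O_1,…,O_n) be an optimal allocation in a market with multi-demand buyers (v_i is k_i-demand, |O_i| = k_i for all i, and every item of M is allocated in O). For each item x let δ(x) be the minimum, over all finite sequences x_1,…,x_r = x (r ≥ 1) of distinct items in which consecutive items belong to different buyers under O, of Σ_{j=1}^{r−1} ( v_{i_j}({x_j}) − v_{i_j}({x_{j+1}}) ), where x_j ∈ O_{i_j}; set p_x := −δ(x). Then for every buyer i and items x ∈ O_i and y ∉ O_i: (1) p_x ≥ 0; (2) v_i({x}) − p_x ≥ v_i({y}) − p_y; and (3) v_i({x}) − p_x ≥ 0.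 -/
open Finset

section Aux

variable {M : Type*} [Fintype M] [DecidableEq M] {n : ℕ}

lemma owner_eq' (O : Fin n → Finset M)
    (hO : IsAlloc O) (owner : M → Fin n) (hown : ∀ x, x ∈ O (owner x))
    {z : M} {i : Fin n} (hz : z ∈ O i) : owner z = i := by
  by_contra h
  exact (Finset.disjoint_left.mp (hO _ _ h) (hown z)) hz

lemma cycle_nonneg'
    (v : Fin n → Finset M → ℝ) (k : Fin n → ℕ)
    (hmono : ∀ i, MonotoneVal (v i)) (hnorm : ∀ i, v i ∅ = 0)
    (hmd : ∀ i, MultiDemand (v i) (k i))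
    (O : Fin n → Finset M) (hO : IsOptimalAlloc v O)
    (hOk : ∀ i, (O i).card = k i)
    (owner : M → Fin n) (hown : ∀ x : M, x ∈ O (owner x))
    (m : ℕ) (d : Fin (m+1) → M) (hd : Function.Injective d) :
    0 ≤ ∑ l : Fin (m+1), (v (owner (d l)) {d l} - v (owner (d l)) {d (l+1)}) := by
  have hOdisj := hO.1
  have hsing : ∀ i z, 0 ≤ v i {z} := fun i z =>
    (hnorm i) ▸ hmono i (Finset.empty_subset {z})
  set C : Finset M := Finset.image d Finset.univ with hC
  set Flt : Fin n → Finset (Fin (m+1)) :=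
    fun i => Finset.univ.filter (fun l => owner (d l) = i) with hFlt
  set A : Fin n → Finset M :=
    fun i => (O i \ C) ∪ Finset.image (fun l => d (l+1)) (Flt i) with hA
  have hinj1 : Function.Injective (fun l : Fin (m+1) => d (l+1)) := by
    intro a b h
    have := hd h
    exact add_left_injective 1 this
  have hmemA : ∀ (i : Fin n) (a : M), a ∈ A i ↔
      (a ∈ O i ∧ a ∉ C) ∨ ∃ l, owner (d l) = i ∧ d (l+1) = a := by
    intro i a
    simp [hA, hFlt, Finset.mem_union, Finset.mem_sdiff, Finset.mem_image,
      Finset.mem_filter]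
  have hCmem : ∀ l : Fin (m+1), d l ∈ C := fun l =>
    Finset.mem_image_of_mem d (Finset.mem_univ l)
  have hAalloc : IsAlloc A := by
    intro i j hij
    rw [Finset.disjoint_left]
    intro a hai haj
    rcases (hmemA i a).mp hai with ⟨h1, h2⟩ | ⟨l, hl, hla⟩
    · rcases (hmemA j a).mp haj with ⟨h1', _⟩ | ⟨l', _, hla'⟩
      · exact (Finset.disjoint_left.mp (hOdisj i j hij) h1) h1'
      · exact h2 (hla' ▸ hCmem (l' + 1))
    · rcases (hmemA j a).mp haj with ⟨_, h2'⟩ | ⟨l', hl', hla'⟩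
      · exact h2' (hla ▸ hCmem (l + 1))
      · have hll : l = l' := hinj1 (hla.trans hla'.symm)
        exact hij ((hl.symm.trans (hll ▸ hl')).symm ▸ rfl)
  have hOC : ∀ i, O i ∩ C = Finset.image d (Flt i) := by
    intro i
    ext z
    simp only [Finset.mem_inter, hC, hFlt, Finset.mem_image, Finset.mem_filter,
      Finset.mem_univ, true_and]
    constructor
    · rintro ⟨hz, l, rfl⟩
      exact ⟨l, owner_eq' O hOdisj owner hown hz, rfl⟩
    · rintro ⟨l, hl, rfl⟩
      exact ⟨hl ▸ hown (d l), ⟨l, rfl⟩⟩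
  have hsubC : ∀ i, Finset.image (fun l => d (l+1)) (Flt i) ⊆ C := by
    intro i a ha
    obtain ⟨l, _, rfl⟩ := Finset.mem_image.mp ha
    exact hCmem (l + 1)
  have hdisjA : ∀ i, Disjoint (O i \ C) (Finset.image (fun l => d (l+1)) (Flt i)) := by
    intro i
    exact Finset.disjoint_left.mpr fun a ha hb =>
      (Finset.mem_sdiff.mp ha).2 (hsubC i hb)
  have hcardOC : ∀ i, (O i ∩ C).card = (Flt i).card := by
    intro i
    rw [hOC i, Finset.card_image_of_injective _ hd]
  have hcard : ∀ i, (A i).card ≤ k i := by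
    intro i
    rw [hA]
    rw [Finset.card_union_of_disjoint (hdisjA i)]
    have h1 : (O i \ C).card + (O i ∩ C).card = (O i).card :=
      Finset.card_sdiff_add_card_inter _ _
    have h2 : (Finset.image (fun l => d (l+1)) (Flt i)).card ≤ (Flt i).card :=
      Finset.card_image_le
    have h3 := hcardOC i
    have h4 := hOk i
    omega
  have hvO : ∀ i, v i (O i) ≤ ∑ z ∈ O i, v i {z} := by
    intro i
    obtain ⟨T, hT, _, hTeq⟩ := (hmd i (O i)).1
    rw [hTeq]
    exact Finset.sum_le_sum_of_subset_of_nonneg hT (fun z _ _ => hsing i z)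
  have hvA : ∀ i, ∑ z ∈ A i, v i {z} ≤ v i (A i) := by
    intro i
    exact (hmd i (A i)).2 ⟨A i, Finset.Subset.refl _, hcard i, rfl⟩
  have hsumA : ∀ i, ∑ z ∈ A i, v i {z}
      = ∑ z ∈ O i, v i {z} - ∑ l ∈ Flt i, v i {d l} + ∑ l ∈ Flt i, v i {d (l+1)} := by
    intro i
    rw [hA]
    rw [Finset.sum_union (hdisjA i)]
    have e1 : ∑ z ∈ Finset.image (fun l => d (l+1)) (Flt i), v i {z}
        = ∑ l ∈ Flt i, v i {d (l+1)} :=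
      Finset.sum_image (fun a _ b _ h => hinj1 h)
    have e2 : ∑ z ∈ O i \ C, v i {z} = ∑ z ∈ O i, v i {z} - ∑ z ∈ O i ∩ C, v i {z} := by
      rw [← Finset.sdiff_inter_self_left]
      exact Finset.sum_sdiff_eq_sub (Finset.inter_subset_left)
    have e3 : ∑ z ∈ O i ∩ C, v i {z} = ∑ l ∈ Flt i, v i {d l} := by
      rw [hOC i]
      exact Finset.sum_image (fun a _ b _ h => hd h)
    rw [e1, e2, e3]
  have hfib1 : ∑ i, ∑ l ∈ Flt i, v i {d l} = ∑ l : Fin (m+1), v (owner (d l)) {d l} := by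
    rw [← Finset.sum_fiberwise Finset.univ (fun l => owner (d l))
      (fun l => v (owner (d l)) {d l})]
    refine Finset.sum_congr rfl fun i _ => Finset.sum_congr rfl fun l hl => ?_
    rw [(Finset.mem_filter.mp hl).2]
  have hfib2 : ∑ i, ∑ l ∈ Flt i, v i {d (l+1)}
      = ∑ l : Fin (m+1), v (owner (d l)) {d (l+1)} := by
    rw [← Finset.sum_fiberwise Finset.univ (fun l => owner (d l))
      (fun l => v (owner (d l)) {d (l+1)})]
    refine Finset.sum_congr rfl fun i _ => Finset.sum_congr rfl fun l hl => ?_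
    rw [(Finset.mem_filter.mp hl).2]
  have hSW : SW v A ≤ SW v O := hO.2 A hAalloc
  have hlow : SW v O - ∑ l : Fin (m+1), (v (owner (d l)) {d l} - v (owner (d l)) {d (l+1)})
      ≤ SW v A := by
    unfold SW
    have : ∀ i, v i (O i) - (∑ l ∈ Flt i, v i {d l} - ∑ l ∈ Flt i, v i {d (l+1)})
        ≤ v i (A i) := by
      intro i
      have := hvO i
      have := hvA i
      have := hsumA i
      linarith
    calc ∑ i, v i (O i) - ∑ l : Fin (m+1),
          (v (owner (d l)) {d l} - v (owner (d l)) {d (l+1)})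
        = ∑ i, (v i (O i) - (∑ l ∈ Flt i, v i {d l} - ∑ l ∈ Flt i, v i {d (l+1)})) := by
          rw [Finset.sum_sub_distrib, ← hfib1, ← hfib2, ← Finset.sum_sub_distrib,
            ← Finset.sum_sub_distrib]
      _ ≤ ∑ i, v i (A i) := Finset.sum_le_sum fun i _ => this i
  linarith

end Aux

/-- Properties of the min-weight-path prices `p x = -δ x`:
nonnegativity of prices, preference of own items, and nonnegative utilities. -/
theorem min_weight_path_prices
    {M : Type*} [Fintype M] [DecidableEq M] {n : ℕ}
    (v : Fin n → Finset M → ℝ) (k : Fin n → ℕ)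
    (hmono : ∀ i, MonotoneVal (v i)) (hnorm : ∀ i, v i ∅ = 0)
    (hmd : ∀ i, MultiDemand (v i) (k i))
    (O : Fin n → Finset M) (hO : IsOptimalAlloc v O)
    (hOk : ∀ i, (O i).card = k i) (hall : ∀ x : M, ∃ i, x ∈ O i)
    (owner : M → Fin n) (hown : ∀ x : M, x ∈ O (owner x))
    (δ : M → ℝ)
    (hδ : ∀ x : M, IsLeast {w : ℝ | ∃ (r : ℕ) (c : Fin (r + 1) → M),
      Function.Injective c ∧ c (Fin.last r) = x ∧
      (∀ j : Fin r, owner (c j.castSucc) ≠ owner (c j.succ)) ∧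
      w = ∑ j : Fin r, (v (owner (c j.castSucc)) {c j.castSucc}
            - v (owner (c j.castSucc)) {c j.succ})} (δ x))
    (p : M → ℝ) (hp : ∀ x, p x = -δ x)
    (i : Fin n) (x y : M) (hx : x ∈ O i) (hy : y ∉ O i) :
    0 ≤ p x ∧ v i {y} - p y ≤ v i {x} - p x ∧ 0 ≤ v i {x} - p x := by
  
  have hOdisj := hO.1
  have hsing : ∀ i z, 0 ≤ v i {z} := fun i z =>
    (hnorm i) ▸ hmono i (Finset.empty_subset {z})
  have hxo : owner x = i := owner_eq' O hOdisj owner hown hx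
  have hyo : owner y ≠ i := fun h => hy (h ▸ hown y)
  have hxy : x ≠ y := fun h => hy (h ▸ hx)
  -- Part 1
  have hdle0 : δ x ≤ 0 := by
    refine (hδ x).2 ⟨0, fun _ => x, fun a b _ => Fin.ext (by omega), rfl,
      fun j => j.elim0, by simp⟩
  have hp1 : 0 ≤ p x := by rw [hp]; linarith
  -- minimal path for x
  obtain ⟨r, c, hcinj, hclast, hcown, hW⟩ := (hδ x).1
  have ceq : ∀ (a b : Fin (r+1)), a.val = b.val → c a = c b :=
    fun a b h => congrArg c (Fin.ext h)
  set g : Fin r → ℝ := fun j => (v (owner (c j.castSucc)) {c j.castSucc}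
      - v (owner (c j.castSucc)) {c j.succ}) with hg
  set G : ℕ → ℝ := fun a => if h : a < r then g ⟨a, h⟩ else 0 with hG
  have hGg : ∀ j : Fin r, G j.val = g j := by
    intro j
    rw [hG]
    simp only [dif_pos j.isLt]
  have hWG : δ x = ∑ a ∈ Finset.range r, G a := by
    rw [hW, ← Fin.sum_univ_eq_sum_range]
    exact Finset.sum_congr rfl fun j _ => (hGg j).symm
  -- key: cycle inequality for suffix starting at position tv
  have key : ∀ (tv : ℕ) (htv : tv ≤ r),
      0 ≤ (∑ a ∈ Finset.range (r - tv), G (tv + a)) + v i {x}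
        - v i {c ⟨tv, by omega⟩} := by
    intro tv htv
    set m := r - tv with hm
    have hm1 : tv + m = r := by omega
    set d2 : Fin (m+1) → M := fun l => c ⟨tv + l.val, by omega⟩ with hd2
    have hd2inj : Function.Injective d2 := by
      intro a b h
      have hv := congrArg Fin.val (hcinj h)
      simp only at hv
      exact Fin.ext (by omega)
    have h0 := cycle_nonneg' v k hmono hnorm hmd O hO hOk owner hown m d2 hd2inj
    rw [Fin.sum_univ_castSucc] at h0
    have hlast1 : d2 (Fin.last m) = x := by
      rw [hd2, ← hclast]
      exact ceq _ _ (by simp [hm1])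
    have hlast2 : d2 (Fin.last m + 1) = c ⟨tv, by omega⟩ := by
      rw [Fin.last_add_one, hd2]
      exact ceq _ _ (by simp)
    have hmid : ∀ j : Fin m,
        (v (owner (d2 j.castSucc)) {d2 j.castSucc}
          - v (owner (d2 j.castSucc)) {d2 (j.castSucc + 1)}) = G (tv + j.val) := by
      intro j
      have hlt : tv + j.val < r := by omega
      rw [Fin.coeSucc_eq_succ]
      have e1 : d2 j.castSucc = c ((⟨tv + j.val, hlt⟩ : Fin r).castSucc) := by
        rw [hd2]; exact ceq _ _ (by simp)
      have e2 : d2 j.succ = c ((⟨tv + j.val, hlt⟩ : Fin r).succ) := by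
        rw [hd2]; exact ceq _ _ (by simp; omega)
      rw [e1, e2]
      simp only [hG]
      rw [dif_pos hlt]
    rw [Finset.sum_congr rfl (fun j _ => hmid j), hlast1, hlast2, hxo] at h0
    rw [← Fin.sum_univ_eq_sum_range (fun a => G (tv + a)) m]
    linarith
  -- Part 3
  have hpart3 : 0 ≤ v i {x} - p x := by
    have h3 := key 0 (Nat.zero_le r)
    have e : ∑ a ∈ Finset.range (r - 0), G (0 + a) = δ x := by
      rw [hWG, Nat.sub_zero]
      exact Finset.sum_congr rfl fun a _ => by rw [Nat.zero_add]
    rw [e] at h3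
    have := hsing i (c ⟨0, by omega⟩)
    rw [hp]
    linarith
  -- Part 2
  have hpart2 : δ y ≤ δ x + (v i {x} - v i {y}) := by
    by_cases hyc : ∃ t : Fin (r+1), c t = y
    · obtain ⟨t, ht⟩ := hyc
      have htr : t.val < r := by
        rcases Nat.lt_or_ge t.val r with h | h
        · exact h
        · exfalso
          have : t = Fin.last r := Fin.ext (by have := t.isLt; simp; omega)
          exact hxy ((this ▸ ht) ▸ hclast).symm
      have hpre : δ y ≤ ∑ a ∈ Finset.range t.val, G a := by
        refine (hδ y).2 ⟨t.val, fun l => c ⟨l.val, by omega⟩, ?_, ?_, ?_, ?_⟩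
        · intro a b h
          have hv := congrArg Fin.val (hcinj h)
          simp only at hv
          exact Fin.ext (by omega)
        · rw [← ht]; exact ceq _ _ (by simp)
        · intro j
          beta_reduce
          have e1 : c (⟨(j.castSucc).val, by omega⟩ : Fin (r+1))
              = c ((⟨j.val, by omega⟩ : Fin r).castSucc) := ceq _ _ (by simp)
          have e2 : c (⟨(j.succ).val, by omega⟩ : Fin (r+1))
              = c ((⟨j.val, by omega⟩ : Fin r).succ) := ceq _ _ (by simp)
          rw [e1, e2]
          exact hcown _
        · rw [← Fin.sum_univ_eq_sum_range G t.val]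
          refine Finset.sum_congr rfl fun j _ => ?_
          have hlt : j.val < r := by omega
          simp only [hG]
          rw [dif_pos hlt]
          simp only [hg]
          have e1 : c (⟨j.val, hlt⟩ : Fin r).castSucc
              = c ((⟨(j.castSucc).val, by omega⟩ : Fin (r+1))) := ceq _ _ (by simp)
          have e2 : c (⟨j.val, hlt⟩ : Fin r).succ
              = c ((⟨(j.succ).val, by omega⟩ : Fin (r+1))) := ceq _ _ (by simp)
          rw [e1, e2]
      have hsuf := key t.val (le_of_lt htr)
      have hty : c ⟨t.val, by omega⟩ = y := by rw [← ht]
      rw [hty] at hsuf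
      have hsplit : δ x = (∑ a ∈ Finset.range t.val, G a)
          + ∑ a ∈ Finset.range (r - t.val), G (t.val + a) := by
        have h1 : ∑ a ∈ Finset.range t.val, G a + ∑ a ∈ Finset.Ico t.val r, G a
            = ∑ a ∈ Finset.range r, G a :=
          Finset.sum_range_add_sum_Ico G (le_of_lt htr)
        have h2 : ∑ a ∈ Finset.Ico t.val r, G a
            = ∑ a ∈ Finset.range (r - t.val), G (t.val + a) :=
          Finset.sum_Ico_eq_sum_range G t.val r
        rw [hWG, ← h1, h2]
      linarith
    · push_neg at hyc
      set d : Fin (r+1+1) → M := fun l => if h : l.val < r + 1 then c ⟨l.val, h⟩ else y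
        with hd
      have hdc : ∀ (l : Fin (r+2)) (h : l.val < r+1), d l = c ⟨l.val, h⟩ := by
        intro l h; rw [hd]; simp only [dif_pos h]
      have hdy : ∀ (l : Fin (r+2)), ¬ l.val < r+1 → d l = y := by
        intro l h; rw [hd]; simp only [dif_neg h]
      refine le_trans ((hδ y).2 ⟨r+1, d, ?_, ?_, ?_, ?_⟩) (le_refl _)
      · intro a b h
        by_cases ha : a.val < r+1 <;> by_cases hb : b.val < r+1
        · rw [hdc a ha, hdc b hb] at h
          have hv := congrArg Fin.val (hcinj h)
          simp only at hv
          exact Fin.ext (by omega)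
        · rw [hdc a ha, hdy b hb] at h; exact absurd h (hyc _)
        · rw [hdy a ha, hdc b hb] at h; exact absurd h.symm (hyc _)
        · exact Fin.ext (by have := a.isLt; have := b.isLt; omega)
      · exact hdy _ (by simp)
      · intro j
        have e1 : d (j.castSucc) = c ⟨j.val, j.isLt⟩ := hdc _ (by simp [j.isLt])
        by_cases hj : j.val < r
        · have e2 : d (j.succ) = c ⟨j.val + 1, by omega⟩ := hdc _ (by simp; omega)
          rw [e1, e2]
          have f1 : c (⟨j.val, j.isLt⟩ : Fin (r+1))
              = c ((⟨j.val, hj⟩ : Fin r).castSucc) := ceq _ _ (by simp)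
          have f2 : c (⟨j.val + 1, by omega⟩ : Fin (r+1))
              = c ((⟨j.val, hj⟩ : Fin r).succ) := ceq _ _ (by simp)
          rw [f1, f2]
          exact hcown _
        · have hjr : j.val = r := by have := j.isLt; omega
          have e2 : d (j.succ) = y := hdy _ (by simp [Fin.val_succ]; omega)
          have e3 : c (⟨j.val, j.isLt⟩ : Fin (r+1)) = x := by
            rw [← hclast]; exact ceq _ _ (by simp [hjr])
          rw [e1, e2, e3, hxo]
          exact fun h => hyo h.symm
      · rw [Fin.sum_univ_castSucc]
        have hlastterm : (v (owner (d (Fin.last r).castSucc)) {d (Fin.last r).castSucc}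
            - v (owner (d (Fin.last r).castSucc)) {d (Fin.last r).succ})
            = v i {x} - v i {y} := by
          have e1 : d (Fin.last r).castSucc = x := by
            rw [hdc _ (by simp), ← hclast]
            exact ceq _ _ (by simp)
          have e2 : d (Fin.last r).succ = y := by
            refine hdy _ ?_
            simp [Fin.val_succ]
          rw [e1, e2, hxo]
        have hmidterm : ∀ j : Fin r,
            (v (owner (d (j.castSucc.castSucc))) {d (j.castSucc.castSucc)}
              - v (owner (d (j.castSucc.castSucc))) {d (j.castSucc.succ)}) = g j := by
          intro j
          have e1 : d (j.castSucc.castSucc) = c j.castSucc := by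
            rw [hdc _ (by simp)]
            exact ceq _ _ (by simp)
          have e2 : d (j.castSucc.succ) = c j.succ := by
            rw [hdc _ (by simp [Fin.val_succ])]
            exact ceq _ _ (by simp [Fin.val_succ])
          rw [e1, e2]
        rw [Finset.sum_congr rfl (fun j _ => hmidterm j), hlastterm, hW]
  refine ⟨hp1, ?_, hpart3⟩
  rw [hp x, hp y]
  linarith
end

section
/- Let v be a monotone, normalized valuation on a finite set M. Then v satisfies (SM) and (RGP) if and only if it satisfies both of the following: (NP-SM) there is no nonnegative price vector p, distinct items x,y and bundle S ⊆ M∖{x,y} with p_x > 0, p_y > 0, such that {S, S∪{x,y}} ⊆ D_p(v) ⊆ {T : T ⊆ S} ∪ {T∪{x,y} : T ⊆ S}; and (NP-RGP) there is no nonnegative price vector p, distinct items x,y,z and bundle S ⊆ M∖{x,y,z} with p_x, p_y, p_z > 0, such that {S∪{x}, S∪{y,z}} ⊆ D_p(v) ⊆ {T∪{x} : T ⊆ S} ∪ {T∪{y,z} : T ⊆ S}. -/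
open Finset

/-!
Prices are additive, so on the bundles occurring in (SM) or (RGP) the utility `u(·, p)` satisfies
the same inequality as `v`. Hence if the two bundles on the small side are demanded, so is a bundle
on the large side, and the demand sets excluded by (NP-SM) and (NP-RGP) contain no such bundle.

Conversely, a violation of (SM) at `x, y, S`, or of (RGP) at `x, y, z, S` (with (SM) in force), is
turned into prices that vanish on `S`, are prohibitive outside `S ∪ W` (`W` the two or three items)
and are chosen on `W` so that, among the bundles `S ∪ R` with `R ⊆ W`, exactly the two bundles of
the forbidden pattern are optimal. By monotonicity `S ∪ (C ∩ W)` does at least as well as any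
demanded bundle `C`, so the demand is exactly the forbidden one.
-/

theorem Finset.subset_or_eq_insert_of_subset_insert {α : Type*} [DecidableEq α] {a : α}
    {s t : Finset α} (h : s ⊆ insert a t) : s ⊆ t ∨ ∃ s' ⊆ t, s = insert a s' := by
  by_cases ha : a ∈ s
  · exact Or.inr ⟨s.erase a, subset_insert_iff.mp h, (insert_erase ha).symm⟩
  · exact Or.inl ((subset_insert_iff_of_notMem ha).mp h)

theorem exists_prices_of_not_rgp {v₀ v₁ v₂ v₃ v₁₂ v₁₃ v₂₃ v₁₂₃ : ℝ}
    (h₂₁₃ : v₂ + v₁₃ < v₁ + v₂₃) (h₃₁₂ : v₃ + v₁₂ < v₁ + v₂₃)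
    (hsm₀ : v₀ + v₂₃ ≤ v₂ + v₃) (hsm₁ : v₁ + v₁₂₃ ≤ v₁₂ + v₁₃)
    (h₁₂ : v₁ ≤ v₁₂) (h₁₃ : v₁ ≤ v₁₃) (h₃ : v₃ ≤ v₁₃) :
    ∃ px py pz : ℝ, 0 < px ∧ 0 < py ∧ 0 < pz ∧ v₂₃ - py - pz = v₁ - px ∧
      v₀ < v₁ - px ∧ v₂ - py < v₁ - px ∧ v₃ - pz < v₁ - px ∧
      v₁₂ - px - py < v₁ - px ∧ v₁₃ - px - pz < v₁ - px ∧ v₁₂₃ - px - py - pz < v₁ - px := by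
  -- `pz` is forced by the tie `v₂₃ - py - pz = v₁ - px`; the interval for `px` is what lets the
  -- lower bounds on `py` and `pz` fit under their sum.
  obtain ⟨px, hpx_lo, hpx_hi⟩ := exists_between
    (max_lt (by linarith) (by linarith) :
      max 0 (v₁₂ + v₁₃ - v₁ - v₂₃) < v₁ + v₂₃ - v₂ - v₃)
  rw [max_lt_iff] at hpx_lo
  obtain ⟨py, hpy_lo, hpy_hi⟩ := exists_between
    (max_lt (lt_min (by linarith) (by linarith)) (lt_min (by linarith) (by linarith)) :
      max (v₁₂ - v₁) (v₂ - v₁ + px) < min (v₂₃ - v₁₃ + px) (v₂₃ - v₃))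
  rw [max_lt_iff] at hpy_lo
  rw [lt_min_iff] at hpy_hi
  exact ⟨px, py, v₂₃ - v₁ + px - py, by linarith, by linarith, by linarith, by linarith,
    by linarith, by linarith, by linarith, by linarith, by linarith, by linarith⟩

section Demand

variable {M : Type*} {v : Finset M → ℝ} {p : M → ℝ}

theorem InDemand.of_add_le {A B C D : Finset M} (hC : InDemand v p C) (hD : InDemand v p D)
    (h : util v p C + util v p D ≤ util v p A + util v p B) : InDemand v p A :=
  fun T => by linarith [hD T, hC B]

theorem util_lt_util_empty_of_mem [Fintype M] (hmono : MonotoneVal v) (hp : ∀ a, 0 ≤ p a)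
    {T : Finset M} {a : M} (ha : a ∈ T) (hpa : v univ - v ∅ < p a) :
    util v p T < util v p ∅ := by
  have hpT : p a ≤ ∑ b ∈ T, p b := single_le_sum (fun b _ => hp b) ha
  have hvT : v T ≤ v univ := hmono (subset_univ T)
  rw [util, util, sum_empty]
  linarith

variable [DecidableEq M]

theorem util_union_of_disjoint {S R : Finset M} (h : Disjoint S R) :
    util v p (S ∪ R) = v (S ∪ R) - ∑ a ∈ S, p a - ∑ a ∈ R, p a := by
  rw [util, sum_union h]
  ring

theorem union_singleton_ne_union_of_mem {S T R : Finset M} {a b : M} (haS : a ∉ S)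
    (hab : a ≠ b) (haR : a ∈ R) : S ∪ {b} ≠ T ∪ R := by
  intro h
  have : a ∈ S ∪ {b} := h ▸ mem_union_right T haR
  simp [haS, hab] at this

theorem util_union_of_forall_eq_zero {S : Finset M} (hS : ∀ a ∈ S, p a = 0) (R : Finset M) :
    util v p (S ∪ R) = v (S ∪ R) - ∑ a ∈ R, p a := by
  rw [util, ← sum_subset subset_union_right fun a ha haR => hS a ?_]
  simpa [haR] using ha

theorem util_le_util_union {S : Finset M} (hmono : MonotoneVal v) (hS : ∀ a ∈ S, p a = 0)
    (T : Finset M) : util v p T ≤ util v p (S ∪ T) := by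
  rw [util_union_of_forall_eq_zero hS, util]
  linarith [hmono (subset_union_right : T ⊆ S ∪ T)]

theorem demand_of_cube_maximizers [Fintype M] (hmono : MonotoneVal v) (hp : ∀ a, 0 ≤ p a)
    {S W R₁ R₂ : Finset M} (hS : ∀ a ∈ S, p a = 0) (hW : ∀ a ∉ S ∪ W, v univ - v ∅ < p a)
    (heq : util v p (S ∪ R₂) = util v p (S ∪ R₁))
    (hlt : ∀ R ⊆ W, R ≠ R₁ → R ≠ R₂ → util v p (S ∪ R) < util v p (S ∪ R₁)) :
    InDemand v p (S ∪ R₁) ∧ InDemand v p (S ∪ R₂) ∧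
      ∀ C, InDemand v p C → (∃ T ⊆ S, C = T ∪ R₁) ∨ ∃ T ⊆ S, C = T ∪ R₂ := by
  have hcube : ∀ R ⊆ W, util v p (S ∪ R) ≤ util v p (S ∪ R₁) := by
    intro R hR
    by_cases h₁ : R = R₁
    · rw [h₁]
    by_cases h₂ : R = R₂
    · rw [h₂, heq]
    exact (hlt R hR h₁ h₂).le
  have houtside : ∀ T, ¬ T ⊆ S ∪ W → util v p T < util v p (S ∪ R₁) := by
    intro T hT
    obtain ⟨a, haT, ha⟩ := not_subset.mp hT
    calc util v p T < util v p ∅ := util_lt_util_empty_of_mem hmono hp haT (hW a ha)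
      _ ≤ util v p (S ∪ ∅) := util_le_util_union hmono hS ∅
      _ ≤ util v p (S ∪ R₁) := hcube ∅ (empty_subset W)
  have hinside : ∀ T ⊆ S ∪ W, util v p T ≤ util v p (S ∪ (T ∩ W)) := by
    intro T hT
    have hST : S ∪ (T ∩ W) = S ∪ T := by
      rw [union_inter_distrib_left, inter_eq_left.mpr (union_subset subset_union_left hT)]
    exact hST ▸ util_le_util_union hmono hS T
  have hmax : InDemand v p (S ∪ R₁) := by
    intro T
    by_cases hT : T ⊆ S ∪ W
    · exact (hinside T hT).trans (hcube _ inter_subset_right)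
    · exact (houtside T hT).le
  refine ⟨hmax, fun T => heq ▸ hmax T, fun C hC => ?_⟩
  have hCW : C ⊆ S ∪ W := by
    by_contra h
    exact (houtside C h).not_ge (hC _)
  have hsplit : C = C ∩ S ∪ C ∩ W := by
    rw [← inter_union_distrib_left, inter_eq_left.mpr hCW]
  by_cases h₁ : C ∩ W = R₁
  · exact Or.inl ⟨C ∩ S, inter_subset_right, h₁ ▸ hsplit⟩
  by_cases h₂ : C ∩ W = R₂
  · exact Or.inr ⟨C ∩ S, inter_subset_right, h₂ ▸ hsplit⟩
  exact absurd (hC _) ((hinside C hCW).trans_lt (hlt _ inter_subset_right h₁ h₂)).not_ge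

theorem npsm_of_sm (hsm : SMcond v) : NPSM v := by
  rintro ⟨p, x, y, S, -, hxy, hxS, hyS, -, -, hdS, hdSxy, hclass⟩
  have hprices :
      util v p S + util v p (S ∪ {x, y}) ≤ util v p (S ∪ {x}) + util v p (S ∪ {y}) := by
    have := hsm x y S hxy hxS hyS
    rw [util_union_of_disjoint (disjoint_singleton_right.mpr hxS),
      util_union_of_disjoint (disjoint_singleton_right.mpr hyS),
      util_union_of_disjoint (by simp [hxS, hyS] : Disjoint S {x, y}),
      sum_pair hxy, sum_singleton, sum_singleton, util]
    linarith
  rcases hclass _ (hdS.of_add_le hdSxy hprices) with hsub | ⟨T, -, hT⟩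
  · exact hxS (hsub (mem_union_right S (mem_singleton_self x)))
  · exact union_singleton_ne_union_of_mem hyS hxy.symm (by simp) hT

theorem nprgp_of_rgp (hrgp : RGPcond v) : NPRGP v := by
  rintro ⟨p, x, y, z, S, -, hxy, hxz, hyz, hxS, hyS, hzS, -, -, -, hdx, hdyz, hclass⟩
  have hdisj : ∀ {a b}, a ∉ S → b ∉ S → Disjoint S {a, b} := fun ha hb =>
    disjoint_insert_right.mpr ⟨ha, disjoint_singleton_right.mpr hb⟩
  have hprices : util v p (S ∪ {x}) + util v p (S ∪ {y, z}) ≤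
      max (util v p (S ∪ {y}) + util v p (S ∪ {x, z}))
        (util v p (S ∪ {z}) + util v p (S ∪ {x, y})) := by
    have := hrgp x y z S hxy hxz hyz hxS hyS hzS
    simp only [util_union_of_disjoint (disjoint_singleton_right.mpr hxS),
      util_union_of_disjoint (disjoint_singleton_right.mpr hyS),
      util_union_of_disjoint (disjoint_singleton_right.mpr hzS),
      util_union_of_disjoint (hdisj hxS hyS), util_union_of_disjoint (hdisj hxS hzS),
      util_union_of_disjoint (hdisj hyS hzS), sum_pair hxy, sum_pair hxz, sum_pair hyz,
      sum_singleton] at this ⊢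
    rcases le_max_iff.mp this with h | h
    · exact le_max_of_le_left (by linarith)
    · exact le_max_of_le_right (by linarith)
  rcases le_max_iff.mp hprices with h | h
  · rcases hclass _ (hdx.of_add_le hdyz h) with ⟨T, -, hT⟩ | ⟨T, -, hT⟩
    · exact union_singleton_ne_union_of_mem hxS hxy (mem_singleton_self x) hT
    · exact union_singleton_ne_union_of_mem hzS hyz.symm (by simp) hT
  · rcases hclass _ (hdx.of_add_le hdyz h) with ⟨T, -, hT⟩ | ⟨T, -, hT⟩
    · exact union_singleton_ne_union_of_mem hxS hxz (mem_singleton_self x) hT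
    · exact union_singleton_ne_union_of_mem hyS hyz (by simp) hT

theorem sm_of_npsm [Fintype M] (hmono : MonotoneVal v) (h : NPSM v) : SMcond v := by
  intro x y S hxy hxS hyS
  by_contra! hviol
  have hvx := hmono (subset_union_left : S ⊆ S ∪ {x})
  have hvy := hmono (subset_union_left : S ⊆ S ∪ {y})
  have hv := hmono (empty_subset (univ : Finset M))
  set px := (v (S ∪ {x, y}) - v S + v (S ∪ {x}) - v (S ∪ {y})) / 2 with hpx
  set py := (v (S ∪ {x, y}) - v S - v (S ∪ {x}) + v (S ∪ {y})) / 2 with hpy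
  set p : M → ℝ := fun a =>
    if a ∈ S then 0 else if a = x then px else if a = y then py else v univ - v ∅ + 1
  have hpx' : p x = px := by simp [p, hxS]
  have hpy' : p y = py := by simp [p, hyS, hxy.symm]
  have hp0 : ∀ a, 0 ≤ p a := by
    intro a
    simp only [p]
    split_ifs <;> linarith
  have hS : ∀ a ∈ S, p a = 0 := fun a ha => if_pos ha
  have hW : ∀ a ∉ S ∪ {x, y}, v univ - v ∅ < p a := by
    intro a ha
    simp only [mem_union, mem_insert, mem_singleton, not_or] at ha
    simp only [p, ha, if_false]
    linarith
  have hutil := util_union_of_forall_eq_zero (v := v) hS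
  have heq : util v p (S ∪ {x, y}) = util v p (S ∪ ∅) := by
    rw [hutil, hutil, sum_pair hxy, sum_empty, union_empty]
    linarith
  have hlt : ∀ R ⊆ {x, y}, R ≠ ∅ → R ≠ {x, y} →
      util v p (S ∪ R) < util v p (S ∪ ∅) := by
    intro R hR h₁ h₂
    rcases subset_or_eq_insert_of_subset_insert hR with hR' | ⟨R, hR', rfl⟩ <;>
      rcases subset_singleton_iff.mp hR' with rfl | rfl
    · exact absurd rfl h₁
    · rw [hutil, hutil, sum_singleton, sum_empty, union_empty]
      linarith
    · rw [hutil, hutil, insert_empty, sum_singleton, sum_empty, union_empty]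
      linarith
    · exact absurd rfl h₂
  obtain ⟨hdS, hdSxy, hclass⟩ := demand_of_cube_maximizers hmono hp0 hS hW heq hlt
  refine h ⟨p, x, y, S, hp0, hxy, hxS, hyS, by linarith, by linarith, by simpa using hdS,
    hdSxy, fun C hC => (hclass C hC).imp (fun ⟨T, hT, hCT⟩ => ?_) id⟩
  simpa [hCT] using hT

theorem rgp_of_sm_of_nprgp [Fintype M] (hmono : MonotoneVal v) (hsm : SMcond v) (h : NPRGP v) :
    RGPcond v := by
  intro x y z S hxy hxz hyz hxS hyS hzS
  by_contra! hviol
  rw [max_lt_iff] at hviol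
  have hsm' := hsm y z (S ∪ {x}) hyz (by simp [hyS, hxy.symm]) (by simp [hzS, hxz.symm])
  rw [union_assoc, union_assoc, union_assoc, ← insert_eq, ← insert_eq, ← insert_eq] at hsm'
  obtain ⟨px, py, pz, hpx, hpy, hpz, hu₂₃, hu₀, hu₂, hu₃, hu₁₂, hu₁₃, hu₁₂₃⟩ :=
    exists_prices_of_not_rgp hviol.1 hviol.2 (hsm y z S hyz hyS hzS) hsm'
      (hmono (by simp)) (hmono (by simp)) (hmono (by simp))
  have hv := hmono (empty_subset (univ : Finset M))
  set p : M → ℝ := fun a => if a ∈ S then 0 else if a = x then px else if a = y then py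
    else if a = z then pz else v univ - v ∅ + 1
  have hpx' : p x = px := by simp [p, hxS]
  have hpy' : p y = py := by simp [p, hyS, hxy.symm]
  have hpz' : p z = pz := by simp [p, hzS, hxz.symm, hyz.symm]
  have hp0 : ∀ a, 0 ≤ p a := by
    intro a
    simp only [p]
    split_ifs <;> linarith
  have hS : ∀ a ∈ S, p a = 0 := fun a ha => if_pos ha
  have hW : ∀ a ∉ S ∪ {x, y, z}, v univ - v ∅ < p a := by
    intro a ha
    simp only [mem_union, mem_insert, mem_singleton, not_or] at ha
    simp only [p, ha, if_false]
    linarith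
  have hutil := util_union_of_forall_eq_zero (v := v) hS
  have heq : util v p (S ∪ {y, z}) = util v p (S ∪ {x}) := by
    rw [hutil, hutil, sum_pair hyz, sum_singleton]
    linarith
  have hlt : ∀ R ⊆ {x, y, z}, R ≠ {x} → R ≠ {y, z} →
      util v p (S ∪ R) < util v p (S ∪ {x}) := by
    intro R hR h₁ h₂
    have hx_yz : x ∉ ({y, z} : Finset M) := by simp [hxy, hxz]
    rcases subset_or_eq_insert_of_subset_insert hR with hR' | ⟨R, hR', rfl⟩ <;>
      rcases subset_or_eq_insert_of_subset_insert hR' with hR'' | ⟨R, hR'', rfl⟩ <;>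
      rcases subset_singleton_iff.mp hR'' with rfl | rfl
    all_goals
      first
      | exact absurd rfl h₂
      | exact absurd insert_empty h₁
      | rw [hutil, hutil]
        simp only [insert_empty, union_empty, sum_empty, sum_singleton, sum_pair hxy,
          sum_pair hxz, sum_insert hx_yz, sum_pair hyz, hpx', hpy', hpz']
        linarith
  obtain ⟨hdx, hdyz, hclass⟩ := demand_of_cube_maximizers hmono hp0 hS hW heq hlt
  exact h ⟨p, x, y, z, S, hp0, hxy, hxz, hyz, hxS, hyS, hzS, by linarith, by linarith,
    by linarith, hdx, hdyz, hclass⟩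

end Demand

theorem sm_rgp_iff_npsm_nprgp_general
    {M : Type*} [Fintype M] [DecidableEq M]
    (v : Finset M → ℝ) (hmono : MonotoneVal v) :
    (SMcond v ∧ RGPcond v) ↔ (NPSM v ∧ NPRGP v) := by
  constructor
  · rintro ⟨hsm, hrgp⟩
    exact ⟨npsm_of_sm hsm, nprgp_of_rgp hrgp⟩
  · rintro ⟨hnpsm, hnprgp⟩
    have hsm := sm_of_npsm hmono hnpsm
    exact ⟨hsm, rgp_of_sm_of_nprgp hmono hsm hnprgp⟩

/-- `v` satisfies (SM) and (RGP) iff it satisfies (NP-SM) and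
(NP-RGP). -/
theorem sm_rgp_iff_npsm_nprgp
    {M : Type*} [Fintype M] [DecidableEq M]
    (v : Finset M → ℝ) (hmono : MonotoneVal v) (hnorm : v ∅ = 0) :
    (SMcond v ∧ RGPcond v) ↔ (NPSM v ∧ NPRGP v) :=
  sm_rgp_iff_npsm_nprgp_general v hmono
end

section
/- Consider a market with n buyers where buyer i has a k_i-demand valuation, |M| = Σ_{i=1}^n k_i, and every optimal allocation allocates all items and gives each buyer i exactly k_i items. Let O = (O_1,…,O_n) be an optimal allocation, and let x_1,…,x_k be items with x_ℓ ∈ O_{i_ℓ}, where i_ℓ ≠ i_{ℓ+1} for all ℓ (indices cyclic, x_{k+1} = x_1). If for every ℓ the item x_{ℓ+1} is legal for buyer i_ℓ, then Σ_{ℓ=1}^{k} ( v_{i_ℓ}({x_ℓ}) − v_{i_ℓ}({x_{ℓ+1}}) ) = 0; that is, the corresponding cycle in the preference graph has weight 0. -/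
open Finset

set_option linter.unusedSectionVars false

section Aux
variable {M : Type*} [Fintype M] [DecidableEq M] {n : ℕ}

lemma exists_alloc_of_flow (k : Fin n → ℕ) (z : Fin n → M → ℤ)
    (hz : ∀ i x, 0 ≤ z i x) (N : ℕ) (hN : 1 ≤ N)
    (hcol : ∀ x, ∑ i, z i x = N)
    (hrow : ∀ i, ∑ x, z i x = N * k i)
    (hcard : Fintype.card M = ∑ i, k i) :
    ∃ A : Fin n → Finset M,
      (∀ i j : Fin n, i ≠ j → Disjoint (A i) (A j)) ∧ (∀ i, (A i).card = k i) ∧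
      (∀ x, ∃ i, x ∈ A i) ∧ (∀ i, ∀ x ∈ A i, 1 ≤ z i x) := by
  classical
  let t : M → Finset ((i : Fin n) × Fin (k i)) := fun y => univ.filter (fun p => 1 ≤ z p.1 y)
  have hall : ∀ s : Finset M, s.card ≤ (s.biUnion t).card := by
    intro s
    set I : Finset (Fin n) := univ.filter (fun i => ∃ y ∈ s, 1 ≤ z i y) with hI
    have hbU : s.biUnion t = I.sigma (fun i => (univ : Finset (Fin (k i)))) := by
      ext p
      simp only [mem_biUnion, Finset.mem_sigma, mem_filter, mem_univ, true_and, t, hI, I,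
        and_true]
    have hcardbU : (s.biUnion t).card = ∑ i ∈ I, k i := by
      rw [hbU, Finset.card_sigma]; simp
    rw [hcardbU]
    have key : (N : ℤ) * s.card ≤ (N : ℤ) * ∑ i ∈ I, (k i : ℤ) := by
      calc (N : ℤ) * s.card = ∑ y ∈ s, ∑ i, z i y := by
            rw [Finset.sum_congr rfl (fun y _ => hcol y)]; simp [mul_comm]
        _ = ∑ i, ∑ y ∈ s, z i y := Finset.sum_comm
        _ = ∑ i ∈ I, ∑ y ∈ s, z i y := by
            refine (Finset.sum_subset (Finset.subset_univ I) ?_).symm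
            intro i _ hiI
            refine Finset.sum_eq_zero fun y hy => ?_
            by_contra h
            exact hiI (by simp [hI, I]; exact ⟨y, hy, lt_of_le_of_ne (hz i y) (Ne.symm h)⟩)
        _ ≤ ∑ i ∈ I, ∑ y, z i y := by
            refine Finset.sum_le_sum fun i _ => ?_
            exact Finset.sum_le_sum_of_subset_of_nonneg (subset_univ s) (fun y _ _ => hz i y)
        _ = ∑ i ∈ I, (N : ℤ) * k i := Finset.sum_congr rfl fun i _ => hrow i
        _ = (N : ℤ) * ∑ i ∈ I, (k i : ℤ) := by rw [Finset.mul_sum]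
    have hNpos : (0 : ℤ) < N := by exact_mod_cast hN
    have := le_of_mul_le_mul_left key hNpos
    exact_mod_cast this
  obtain ⟨f, hfinj, hft⟩ := (Finset.all_card_le_biUnion_card_iff_exists_injective t).mp hall
  let A : Fin n → Finset M := fun i => univ.filter (fun y => (f y).1 = i)
  have hmem : ∀ i x, x ∈ A i ↔ (f x).1 = i := by intro i x; simp [A]
  have hz1 : ∀ i, ∀ x ∈ A i, 1 ≤ z i x := by
    intro i x hx
    have := hft x
    simp only [t, mem_filter] at this
    rw [← (hmem i x).mp hx]; exact this.2
  have hcomp : ∀ x, ∃ i, x ∈ A i := fun x => ⟨(f x).1, by simp [A]⟩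
  have hdisj : ∀ i j : Fin n, i ≠ j → Disjoint (A i) (A j) := by
    intro i j hij
    rw [Finset.disjoint_left]
    intro x hxi hxj
    exact hij (((hmem i x).mp hxi).symm.trans ((hmem j x).mp hxj))
  have hle : ∀ i, (A i).card ≤ k i := by
    intro i
    have h1 : ((A i).image f).card = (A i).card := Finset.card_image_of_injective _ hfinj
    have h2 : (A i).image f ⊆ univ.filter (fun p : ((i : Fin n) × Fin (k i)) => p.1 = i) := by
      intro p hp
      simp only [mem_image] at hp
      obtain ⟨y, hy, rfl⟩ := hp
      simp [(hmem i y).mp hy]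
    have h3 : (univ.filter (fun p : ((i : Fin n) × Fin (k i)) => p.1 = i)).card = k i := by
      have : univ.filter (fun p : ((i : Fin n) × Fin (k i)) => p.1 = i) = ({i} : Finset (Fin n)).sigma (fun i => (univ : Finset (Fin (k i)))) := by
        ext p; simp [Finset.mem_sigma]
      rw [this, Finset.card_sigma]; simp
    calc (A i).card = ((A i).image f).card := h1.symm
      _ ≤ _ := Finset.card_le_card h2
      _ = k i := h3
  have hsum : ∑ i, (A i).card = ∑ i, k i := by
    rw [← hcard, ← Finset.card_eq_sum_card_fiberwise (fun y (_ : y ∈ univ) => mem_univ (f y).1)]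
    · rfl
  have hAcard : ∀ i, (A i).card = k i := by
    intro i
    have := (Finset.sum_eq_sum_iff_of_le (fun i (_ : i ∈ univ) => hle i)).mp hsum
    exact this i (mem_univ i)
  exact ⟨A, hdisj, hAcard, hcomp, hz1⟩

/-- Indicator sum over a complete disjoint family. -/
lemma sum_indicator_alloc (A : Fin n → Finset M) (hA : IsAlloc A)
    (hcomp : ∀ x : M, ∃ i, x ∈ A i) (y : M) :
    ∑ i, (if y ∈ A i then (1 : ℤ) else 0) = 1 := by
  obtain ⟨j, hj⟩ := hcomp y
  rw [Finset.sum_eq_single_of_mem j (mem_univ j)]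
  · rw [if_pos hj]
  · intro i _ hij
    rw [if_neg]
    intro hyi
    exact (Finset.disjoint_left.mp (hA i j hij) hyi) hj

/-- For an optimal allocation (with exact cardinalities), the value of each
bundle equals the sum of singleton values. -/
lemma sum_singletons_eq (v : Fin n → Finset M → ℝ) (k : Fin n → ℕ)
    (hmono : ∀ i, MonotoneVal (v i)) (hnorm : ∀ i, v i ∅ = 0)
    (hmd : ∀ i, MultiDemand (v i) (k i))
    (A : Fin n → Finset M) (hAcard : ∀ i, (A i).card = k i) (i : Fin n) :
    ∑ y ∈ A i, v i {y} = v i (A i) := by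
  refine le_antisymm ((hmd i (A i)).2 ⟨A i, Finset.Subset.refl _, le_of_eq (hAcard i), rfl⟩) ?_
  obtain ⟨T, hT, _, hTv⟩ := (hmd i (A i)).1
  rw [hTv]
  refine Finset.sum_le_sum_of_subset_of_nonneg hT fun y _ _ => ?_
  rw [← hnorm i]
  exact hmono i (Finset.empty_subset _)

lemma flow_weight_le (v : Fin n → Finset M → ℝ) (k : Fin n → ℕ)
    (hmd : ∀ i, MultiDemand (v i) (k i))
    (O : Fin n → Finset M) (hO : IsOptimalAlloc v O)
    (hcard : Fintype.card M = ∑ i, k i) :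
    ∀ (N : ℕ) (z : Fin n → M → ℤ), (∀ i x, 0 ≤ z i x) →
      (∀ x, ∑ i, z i x = N) → (∀ i, ∑ x, z i x = N * k i) →
      ∑ i, ∑ x, (z i x : ℝ) * v i {x} ≤ N * SW v O := by
  intro N
  induction N with
  | zero =>
    intro z hz hcol hrow
    have hz0 : ∀ i x, z i x = 0 := by
      intro i x
      have h := hcol x
      exact (Finset.sum_eq_zero_iff_of_nonneg (fun i _ => hz i x)).mp
        (by simpa using h) i (mem_univ i)
    simp [hz0]
  | succ N ih =>
    intro z hz hcol hrow
    obtain ⟨A, hdisj, hAcard, hcomp, hz1⟩ := exists_alloc_of_flow k z hz (N + 1)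
      (Nat.succ_le_succ (Nat.zero_le N)) hcol hrow hcard
    set z' : Fin n → M → ℤ := fun i x => z i x - (if x ∈ A i then 1 else 0) with hz'def
    have hz'nn : ∀ i x, 0 ≤ z' i x := by
      intro i x
      simp only [hz'def]
      split_ifs with h
      · have := hz1 i x h; omega
      · have := hz i x; omega
    have hcol' : ∀ x, ∑ i, z' i x = N := by
      intro x
      simp only [hz'def, Finset.sum_sub_distrib]
      rw [hcol x, sum_indicator_alloc A hdisj hcomp x]
      push_cast; ring
    have hcarda : ∀ i, ∑ x : M, (if x ∈ A i then (1 : ℤ) else 0) = k i := by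
      intro i
      rw [Finset.sum_ite_mem, Finset.univ_inter, Finset.sum_const, ← hAcard i]
      simp
    have hrow' : ∀ i, ∑ x, z' i x = N * k i := by
      intro i
      simp only [hz'def, Finset.sum_sub_distrib]
      rw [hrow i, hcarda i]
      push_cast; ring
    have hIH := ih z' hz'nn hcol' hrow'
    have hsplit : ∑ i, ∑ x, (z i x : ℝ) * v i {x} =
        (∑ i, ∑ x, (z' i x : ℝ) * v i {x}) + ∑ i, ∑ y ∈ A i, v i {y} := by
      rw [← Finset.sum_add_distrib]
      refine Finset.sum_congr rfl fun i _ => ?_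
      have : ∑ y ∈ A i, v i {y} = ∑ x : M, (if x ∈ A i then (1:ℝ) else 0) * v i {x} := by
        simp [ite_mul, Finset.sum_ite_mem]
      rw [this, ← Finset.sum_add_distrib]
      refine Finset.sum_congr rfl fun x _ => ?_
      simp only [hz'def]
      split_ifs <;> push_cast <;> ring
    have hAval : ∑ i, ∑ y ∈ A i, v i {y} ≤ SW v O := by
      have h1 : ∀ i, ∑ y ∈ A i, v i {y} ≤ v i (A i) :=
        fun i => (hmd i (A i)).2 ⟨A i, Finset.Subset.refl _, le_of_eq (hAcard i), rfl⟩
      calc ∑ i, ∑ y ∈ A i, v i {y} ≤ ∑ i, v i (A i) := Finset.sum_le_sum fun i _ => h1 i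
        _ = SW v A := rfl
        _ ≤ SW v O := hO.2 A hdisj
    rw [hsplit]
    push_cast
    linarith
end Aux

section Cyc
variable {M : Type*} [Fintype M] [DecidableEq M] {n : ℕ}

lemma cycle_sum_nonpos (v : Fin n → Finset M → ℝ) (k : Fin n → ℕ)
    (hmono : ∀ i, MonotoneVal (v i)) (hnorm : ∀ i, v i ∅ = 0)
    (hmd : ∀ i, MultiDemand (v i) (k i))
    (hcard : Fintype.card M = ∑ i, k i)
    (hopt : ∀ A : Fin n → Finset M, IsOptimalAlloc v A →
      (∀ x : M, ∃ i, x ∈ A i) ∧ ∀ i, (A i).card = k i)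
    (O : Fin n → Finset M) (hO : IsOptimalAlloc v O)
    {c : ℕ} (i : Fin (c + 1) → Fin n)
    (B : Fin (c + 1) → Fin n → Finset M) (hB : ∀ ℓ, IsOptimalAlloc v (B ℓ))
    (a b : Fin (c + 1) → M) (ha : ∀ ℓ, a ℓ ∈ B ℓ (i ℓ))
    (hab : ∀ y : M, ∑ ℓ, (if y = a ℓ then (1 : ℤ) else 0) =
      ∑ ℓ, (if y = b ℓ then 1 else 0)) :
    ∑ ℓ, (v (i ℓ) {b ℓ} - v (i ℓ) {a ℓ}) ≤ 0 := by
  classical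
  have hBopt : ∀ ℓ, (∀ x : M, ∃ j, x ∈ B ℓ j) ∧ ∀ j, (B ℓ j).card = k j :=
    fun ℓ => hopt (B ℓ) (hB ℓ)
  have hBSW : ∀ ℓ, SW v (B ℓ) = SW v O :=
    fun ℓ => le_antisymm (hO.2 (B ℓ) (hB ℓ).1) ((hB ℓ).2 O hO.1)
  set e : Fin (c + 1) → Fin n → M → ℤ := fun ℓ i' y =>
    (if y ∈ B ℓ i' then 1 else 0) - (if i' = i ℓ ∧ y = a ℓ then 1 else 0)
      + (if i' = i ℓ ∧ y = b ℓ then 1 else 0) with he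
  set z : Fin n → M → ℤ := fun i' y => ∑ ℓ, e ℓ i' y with hz
  -- nonnegativity
  have hznn : ∀ i' y, 0 ≤ z i' y := by
    intro i' y
    refine Finset.sum_nonneg fun ℓ _ => ?_
    simp only [he]
    by_cases h2 : i' = i ℓ ∧ y = a ℓ
    · have h1 : y ∈ B ℓ i' := by rw [h2.1, h2.2]; exact ha ℓ
      rw [if_pos h1, if_pos h2]
      split_ifs <;> norm_num
    · rw [if_neg h2]
      split_ifs <;> norm_num
  -- the pair indicator sums
  have hpairI : ∀ (ℓ : Fin (c + 1)) (m y : M),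
      ∑ i' : Fin n, (if i' = i ℓ ∧ y = m then (1 : ℤ) else 0) =
        if y = m then 1 else 0 := by
    intro ℓ m y
    simp [ite_and]
  have hpairM : ∀ (ℓ : Fin (c + 1)) (m : M) (i' : Fin n),
      ∑ y : M, (if i' = i ℓ ∧ y = m then (1 : ℤ) else 0) =
        if i' = i ℓ then 1 else 0 := by
    intro ℓ m i'
    simp [ite_and]
  -- column marginals
  have hcol : ∀ y, ∑ i', z i' y = (c + 1 : ℕ) := by
    intro y
    simp only [hz]
    rw [Finset.sum_comm]
    have : ∀ ℓ : Fin (c + 1), ∑ i', e ℓ i' y =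
        1 - (if y = a ℓ then (1 : ℤ) else 0) + (if y = b ℓ then 1 else 0) := by
      intro ℓ
      simp only [he, Finset.sum_add_distrib, Finset.sum_sub_distrib]
      rw [sum_indicator_alloc (B ℓ) (hB ℓ).1 (hBopt ℓ).1 y, hpairI ℓ (a ℓ) y,
        hpairI ℓ (b ℓ) y]
    rw [Finset.sum_congr rfl fun ℓ _ => this ℓ]
    simp only [Finset.sum_add_distrib, Finset.sum_sub_distrib, Finset.sum_const,
      Finset.card_univ, Fintype.card_fin]
    rw [hab y]
    push_cast
    ring
  -- row marginals
  have hrow : ∀ i', ∑ y, z i' y = (c + 1 : ℕ) * k i' := by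
    intro i'
    simp only [hz]
    rw [Finset.sum_comm]
    have : ∀ ℓ : Fin (c + 1), ∑ y, e ℓ i' y = k i' := by
      intro ℓ
      simp only [he, Finset.sum_add_distrib, Finset.sum_sub_distrib]
      rw [hpairM ℓ (a ℓ) i', hpairM ℓ (b ℓ) i']
      rw [Finset.sum_ite_mem, Finset.univ_inter, Finset.sum_const, (hBopt ℓ).2 i']
      split_ifs <;> push_cast <;> ring
    rw [Finset.sum_congr rfl fun ℓ _ => this ℓ]
    simp only [Finset.sum_const, Finset.card_univ, Fintype.card_fin]
    push_cast
    ring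
  -- total weight
  have hsingles : ∀ ℓ, ∀ i' : Fin n, ∑ y ∈ B ℓ i', v i' {y} = v i' (B ℓ i') :=
    fun ℓ => sum_singletons_eq v k hmono hnorm hmd (B ℓ) ((hBopt ℓ).2)
  have hweight : ∑ i', ∑ y, (z i' y : ℝ) * v i' {y} =
      (c + 1 : ℕ) * SW v O + ∑ ℓ, (v (i ℓ) {b ℓ} - v (i ℓ) {a ℓ}) := by
    have hcast : ∀ i' y, (z i' y : ℝ) * v i' {y} =
        ∑ ℓ, (((if y ∈ B ℓ i' then (1 : ℝ) else 0)
          - (if i' = i ℓ ∧ y = a ℓ then 1 else 0)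
          + (if i' = i ℓ ∧ y = b ℓ then 1 else 0)) * v i' {y}) := by
      intro i' y
      rw [hz]
      push_cast
      rw [Finset.sum_mul]
      refine Finset.sum_congr rfl fun ℓ _ => ?_
      simp only [he]
      split_ifs <;> push_cast <;> ring
    calc ∑ i', ∑ y, (z i' y : ℝ) * v i' {y}
        = ∑ ℓ, ∑ i' : Fin n, ∑ y : M,
            (((if y ∈ B ℓ i' then (1 : ℝ) else 0)
              - (if i' = i ℓ ∧ y = a ℓ then 1 else 0)
              + (if i' = i ℓ ∧ y = b ℓ then 1 else 0)) * v i' {y}) := by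
          rw [Finset.sum_congr rfl fun i' _ => Finset.sum_congr rfl fun y _ => hcast i' y]
          rw [Finset.sum_congr rfl fun i' (_ : i' ∈ univ) => Finset.sum_comm]
          exact Finset.sum_comm
      _ = ∑ ℓ, (SW v O - v (i ℓ) {a ℓ} + v (i ℓ) {b ℓ}) := by
          refine Finset.sum_congr rfl fun ℓ _ => ?_
          have hW1 : ∑ i' : Fin n, ∑ y : M,
              (if y ∈ B ℓ i' then (1 : ℝ) else 0) * v i' {y} = SW v O := by
            rw [← hBSW ℓ]
            refine Finset.sum_congr rfl fun i' _ => ?_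
            rw [← hsingles ℓ i']
            simp [ite_mul, Finset.sum_ite_mem]
          have hW2 : ∀ m : M, ∑ i' : Fin n, ∑ y : M,
              (if i' = i ℓ ∧ y = m then (1 : ℝ) else 0) * v i' {y} =
              v (i ℓ) {m} := by
            intro m
            simp [ite_and, ite_mul]
          simp only [sub_mul, add_mul, Finset.sum_add_distrib, Finset.sum_sub_distrib]
          rw [hW1, hW2 (a ℓ), hW2 (b ℓ)]
      _ = (c + 1 : ℕ) * SW v O + ∑ ℓ, (v (i ℓ) {b ℓ} - v (i ℓ) {a ℓ}) := by
          simp only [Finset.sum_add_distrib, Finset.sum_sub_distrib, Finset.sum_const,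
            Finset.card_univ, Fintype.card_fin]
          push_cast
          ring
  have hle := flow_weight_le v k hmd O hO hcard (c + 1) z hznn hcol hrow
  rw [hweight] at hle
  linarith
end Cyc


/-- If every item `x (ℓ+1)` is legal for buyer `i ℓ`, then the
corresponding cycle in the preference graph has weight 0. -/
theorem legal_cycle_has_zero_weight
    {M : Type*} [Fintype M] [DecidableEq M] {n : ℕ}
    (v : Fin n → Finset M → ℝ) (k : Fin n → ℕ)
    (hmono : ∀ i, MonotoneVal (v i)) (hnorm : ∀ i, v i ∅ = 0)
    (hmd : ∀ i, MultiDemand (v i) (k i))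
    (hcard : Fintype.card M = ∑ i, k i)
    (hopt : ∀ A : Fin n → Finset M, IsOptimalAlloc v A →
      (∀ x : M, ∃ i, x ∈ A i) ∧ ∀ i, (A i).card = k i)
    (O : Fin n → Finset M) (hO : IsOptimalAlloc v O)
    {c : ℕ} (i : Fin (c + 1) → Fin n) (x : Fin (c + 1) → M)
    (hxO : ∀ ℓ, x ℓ ∈ O (i ℓ))
    (hne : ∀ ℓ : Fin (c + 1), i ℓ ≠ i (ℓ + 1))
    (hleg : ∀ ℓ : Fin (c + 1), LegalItem v (i ℓ) (x (ℓ + 1))) :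
    ∑ ℓ : Fin (c + 1), (v (i ℓ) {x ℓ} - v (i ℓ) {x (ℓ + 1)}) = 0 := by
    classical
  choose A hAopt hAx using hleg
  have hshift : ∀ y : M, ∑ ℓ : Fin (c + 1), (if y = x (ℓ + 1) then (1 : ℤ) else 0) =
      ∑ ℓ : Fin (c + 1), (if y = x ℓ then 1 else 0) := by
    intro y
    exact Fintype.sum_equiv (Equiv.addRight (1 : Fin (c + 1)))
      (fun ℓ => if y = x (ℓ + 1) then (1 : ℤ) else 0)
      (fun ℓ => if y = x ℓ then (1 : ℤ) else 0) (fun ℓ => rfl)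
  have h1 := cycle_sum_nonpos v k hmono hnorm hmd hcard hopt O hO i A hAopt
    (fun ℓ => x (ℓ + 1)) x hAx hshift
  have h2 := cycle_sum_nonpos v k hmono hnorm hmd hcard hopt O hO i (fun _ => O)
    (fun _ => hO) x (fun ℓ => x (ℓ + 1)) hxO (fun y => (hshift y).symm)
  have hzero : (∑ ℓ : Fin (c + 1), (v (i ℓ) {x ℓ} - v (i ℓ) {x (ℓ + 1)})) +
      ∑ ℓ : Fin (c + 1), (v (i ℓ) {x (ℓ + 1)} - v (i ℓ) {x ℓ}) = 0 := by
    rw [← Finset.sum_add_distrib]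
    simp
  linarith
end

section
/- Consider a market with n buyers where buyer i has a k_i-demand valuation, |M| = Σ_{i=1}^n k_i, and every optimal allocation allocates all items and gives each buyer i exactly k_i items. Let O = (O_1,…,O_n) be an optimal allocation, and let x_1,…,x_k be items with x_ℓ ∈ O_{i_ℓ}, where i_ℓ ≠ i_{ℓ+1} for all ℓ (indices cyclic, x_{k+1} = x_1). If Σ_{ℓ=1}^{k} ( v_{i_ℓ}({x_ℓ}) − v_{i_ℓ}({x_{ℓ+1}}) ) = 0, then for every ℓ the item x_{ℓ+1} is legal for buyer i_ℓ. -/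
open Finset

/-!
A cycle whose items are pairwise distinct can be traded around: buyer `i ℓ` hands in `x ℓ` and
takes `x (ℓ + 1)`. Every bundle keeps its size `k i`, on which a `k i`-demand valuation is
additive, so the welfare drops by exactly the weight of the cycle. Optimality of `O` makes that
weight nonnegative, and when it is zero the traded allocation is optimal too, which makes
`x (ℓ + 1)` legal for `i ℓ`. A cycle that repeats an item splits at the repetition into two
shorter cycles whose weights add up; both are nonnegative by induction, hence both are zero.
-/

namespace MultiDemand

variable {M : Type*} {v : Finset M → ℝ} {k : ℕ}

theorem singleton_nonneg_s14 (h : MultiDemand v k) (y : M) : 0 ≤ v {y} :=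
  (h {y}).2 ⟨∅, empty_subset _, by simp, by simp⟩

theorem apply_eq_sum (h : MultiDemand v k) {S : Finset M} (hS : S.card ≤ k) :
    v S = ∑ y ∈ S, v {y} := by
  refine le_antisymm ?_ ((h S).2 ⟨S, subset_rfl, hS, rfl⟩)
  obtain ⟨T, hTS, -, hT⟩ := (h S).1
  rw [hT]
  exact sum_le_sum_of_subset_of_nonneg hTS fun y _ _ => h.singleton_nonneg_s14 y

end MultiDemand

theorem IsOptimalAlloc.of_sw_eq {M ι : Type*} [Fintype ι] {v : ι → Finset M → ℝ}
    {O A : ι → Finset M} (hO : IsOptimalAlloc v O) (hA : IsAlloc A) (h : SW v A = SW v O) :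
    IsOptimalAlloc v A :=
  ⟨hA, fun B hB => h ▸ hO.2 B hB⟩

section Reassign

variable {ι M κ : Type*} [DecidableEq ι] [DecidableEq M]

/-- Arcs `e ∈ E` along which buyer `b e` can trade her item `s e` for the item `t e`. -/
structure IsExchange (O : ι → Finset M) (E : Finset κ) (b : κ → ι) (s t : κ → M) :
    Prop where
  src_mem : ∀ e ∈ E, s e ∈ O (b e)
  exists_src_eq_tgt : ∀ e ∈ E, ∃ e' ∈ E, s e' = t e
  injOn_src : Set.InjOn s E
  injOn_tgt : Set.InjOn t E

def reassign (O : ι → Finset M) (E : Finset κ) (b : κ → ι) (s t : κ → M) (j : ι) :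
    Finset M :=
  (O j \ {e ∈ E | b e = j}.image s) ∪ {e ∈ E | b e = j}.image t

variable {O : ι → Finset M} {E : Finset κ} {b : κ → ι} {s t : κ → M}

namespace IsExchange

theorem image_src_subset (hE : IsExchange O E b s t) (j : ι) :
    {e ∈ E | b e = j}.image s ⊆ O j := by
  intro y hy
  obtain ⟨e, he, rfl⟩ := mem_image.mp hy
  exact (mem_filter.mp he).2 ▸ hE.src_mem e (mem_filter.mp he).1

theorem tgt_not_mem_sdiff (hO : IsAlloc O) (hE : IsExchange O E b s t) {e : κ} (he : e ∈ E)
    (j : ι) : t e ∉ O j \ {e ∈ E | b e = j}.image s := by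
  intro hj
  obtain ⟨e', he', hse'⟩ := hE.exists_src_eq_tgt e he
  have hbj : b e' = j := by
    by_contra hne
    exact disjoint_left.mp (hO _ _ hne) (hse' ▸ hE.src_mem e' he') (mem_sdiff.mp hj).1
  exact (mem_sdiff.mp hj).2 (mem_image.mpr ⟨e', mem_filter.mpr ⟨he', hbj⟩, hse'⟩)

theorem disjoint_sdiff_image_tgt (hO : IsAlloc O) (hE : IsExchange O E b s t) (j j' : ι) :
    Disjoint (O j \ {e ∈ E | b e = j}.image s) ({e ∈ E | b e = j'}.image t) := by
  refine disjoint_right.mpr fun y hy => ?_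
  obtain ⟨e, he, rfl⟩ := mem_image.mp hy
  exact hE.tgt_not_mem_sdiff hO (mem_filter.mp he).1 j

theorem isAlloc_reassign (hO : IsAlloc O) (hE : IsExchange O E b s t) :
    IsAlloc (reassign O E b s t) := by
  intro j j' hjj'
  refine disjoint_left.mpr fun y hy hy' => ?_
  rcases mem_union.mp hy with hy | hy <;> rcases mem_union.mp hy' with hy' | hy'
  · exact disjoint_left.mp (hO j j' hjj') (mem_sdiff.mp hy).1 (mem_sdiff.mp hy').1
  · exact disjoint_left.mp (hE.disjoint_sdiff_image_tgt hO j j') hy hy'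
  · exact disjoint_right.mp (hE.disjoint_sdiff_image_tgt hO j' j) hy hy'
  · obtain ⟨e, he, rfl⟩ := mem_image.mp hy
    obtain ⟨e', he', hee'⟩ := mem_image.mp hy'
    rw [mem_filter] at he he'
    exact hjj' (he.2 ▸ he'.2 ▸ congrArg b (hE.injOn_tgt he'.1 he.1 hee')).symm

theorem sum_reassign (hO : IsAlloc O) (hE : IsExchange O E b s t) (f : M → ℝ) (j : ι) :
    ∑ y ∈ reassign O E b s t j, f y =
      ∑ y ∈ O j, f y - ∑ e ∈ E with b e = j, f (s e) +
        ∑ e ∈ E with b e = j, f (t e) := by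
  rw [reassign, sum_union (hE.disjoint_sdiff_image_tgt hO j j),
    sum_sdiff_eq_sub (hE.image_src_subset j), sum_image (hE.injOn_src.mono (filter_subset _ _)),
    sum_image (hE.injOn_tgt.mono (filter_subset _ _))]

theorem card_reassign (hO : IsAlloc O) (hE : IsExchange O E b s t) (j : ι) :
    (reassign O E b s t j).card = (O j).card := by
  have h := hE.sum_reassign hO (fun _ => 1) j
  simp only [sum_const, nsmul_eq_mul, mul_one] at h
  exact_mod_cast (h.trans (by ring) : ((reassign O E b s t j).card : ℝ) = (O j).card)

theorem sw_reassign [Fintype ι] {v : ι → Finset M → ℝ} {k : ι → ℕ}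
    (hmd : ∀ j, MultiDemand (v j) (k j)) (hO : IsAlloc O) (hcard : ∀ j, (O j).card = k j)
    (hE : IsExchange O E b s t) :
    SW v (reassign O E b s t) = SW v O - ∑ e ∈ E, (v (b e) {s e} - v (b e) {t e}) := by
  have hv : ∀ j, v j (reassign O E b s t j) =
      v j (O j) - ∑ e ∈ E with b e = j, (v (b e) {s e} - v (b e) {t e}) := by
    intro j
    rw [(hmd j).apply_eq_sum (hE.card_reassign hO j ▸ hcard j).le,
      (hmd j).apply_eq_sum (hcard j).le, hE.sum_reassign hO, sum_sub_distrib]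
    have hb (f : ι → κ → ℝ) :
        ∑ e ∈ E with b e = j, f (b e) e = ∑ e ∈ E with b e = j, f j e :=
      sum_congr rfl fun e he => by rw [(mem_filter.mp he).2]
    rw [hb fun i e => v i {s e}, hb fun i e => v i {t e}]
    ring
  rw [SW, SW, sum_congr rfl fun j _ => hv j, sum_sub_distrib, sum_fiberwise]

end IsExchange

end Reassign

section Cycle

variable {ι M : Type*} {p : List (ι × M)}

/-- A cycle is a list of cells `(j, y)`, buyer `j` holding item `y`; the arc leaving a cell
points to the item of the next cell, the last cell pointing back to the first. -/
def cycleArcs (p : List (ι × M)) : List ((ι × M) × M) :=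
  p.zip ((p.map Prod.snd).rotate 1)

def cycleWeight (v : ι → Finset M → ℝ) (p : List (ι × M)) : ℝ :=
  ((cycleArcs p).map fun e => v e.1.1 {e.1.2} - v e.1.1 {e.2}).sum

theorem map_fst_cycleArcs (p : List (ι × M)) : (cycleArcs p).map Prod.fst = p :=
  List.map_fst_zip (by simp)

theorem map_snd_cycleArcs (p : List (ι × M)) :
    (cycleArcs p).map Prod.snd = (p.map Prod.snd).rotate 1 :=
  List.map_snd_zip (by simp)

theorem cycleArcs_rotate (p : List (ι × M)) (n : ℕ) :
    cycleArcs (p.rotate n) = (cycleArcs p).rotate n := by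
  rw [cycleArcs, cycleArcs, List.zip, List.zipWith_rotate_distrib _ _ _ _ (by simp),
    List.map_rotate, List.rotate_rotate, List.rotate_rotate, add_comm]

theorem cycleArcs_cons_append_cons {q q' : ι × M} (h : q.2 = q'.2) (b c : List (ι × M)) :
    cycleArcs (q :: b ++ q' :: c) = cycleArcs (q :: b) ++ cycleArcs (q' :: c) := by
  simp only [cycleArcs, List.map_cons, List.map_append, List.rotate_cons_succ, List.rotate_zero,
    List.cons_append, h]
  rw [← List.cons_append, ← List.zip_append (by simp)]
  simp

/-- Cutting a cycle at two cells holding the same item leaves two shorter cycles. -/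
theorem cycleArcs_perm_of_snd_eq {q q' : ι × M} (h : q.2 = q'.2) (a b c : List (ι × M)) :
    (cycleArcs (a ++ q :: b ++ q' :: c)).Perm
      (cycleArcs (q :: b) ++ cycleArcs (q' :: (c ++ a))) := by
  have hrot : (a ++ q :: b ++ q' :: c).rotate a.length = q :: b ++ q' :: (c ++ a) := by
    simp [List.append_assoc, List.rotate_append_length_eq]
  rw [← cycleArcs_cons_append_cons h, ← hrot, cycleArcs_rotate]
  exact (List.rotate_perm _ _).symm

theorem exists_eq_append_of_not_nodup {p : List (ι × M)} (h : ¬ (p.map Prod.snd).Nodup) :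
    ∃ a q b q' c, q.2 = q'.2 ∧ p = a ++ q :: b ++ q' :: c := by
  induction p with
  | nil => simp at h
  | cons q p ih =>
    rw [List.map_cons, List.nodup_cons, not_and_or, not_not] at h
    rcases h with h | h
    · obtain ⟨q', hq', hqq'⟩ := List.mem_map.mp h
      obtain ⟨b, c, rfl⟩ := List.append_of_mem hq'
      exact ⟨[], q, b, q', c, hqq'.symm, rfl⟩
    · obtain ⟨a, r, b, r', c, hr, rfl⟩ := ih h
      exact ⟨q :: a, r, b, r', c, hr, rfl⟩

theorem cycle_induction {P : List (ι × M) → Prop}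
    (nodup : ∀ p, (p.map Prod.snd).Nodup → P p)
    (split : ∀ a q b q' c, q.2 = q'.2 → P (q :: b) → P (q' :: (c ++ a)) →
      P (a ++ q :: b ++ q' :: c))
    (p : List (ι × M)) : P p := by
  induction h : p.length using Nat.strong_induction_on generalizing p with
  | _ L ih =>
    by_cases hp : (p.map Prod.snd).Nodup
    · exact nodup p hp
    obtain ⟨a, q, b, q', c, hq, rfl⟩ := exists_eq_append_of_not_nodup hp
    simp only [List.length_append, List.length_cons] at h
    exact split a q b q' c hq (ih _ (by simp; omega) _ rfl) (ih _ (by simp; omega) _ rfl)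

theorem nodup_cycleArcs (hnd : (p.map Prod.snd).Nodup) : (cycleArcs p).Nodup := by
  refine List.Nodup.of_map (Prod.snd ∘ Prod.fst) ?_
  rwa [← List.map_map, map_fst_cycleArcs]

theorem cycleWeight_append_of_snd_eq (v : ι → Finset M → ℝ) {q q' : ι × M} (h : q.2 = q'.2)
    (a b c : List (ι × M)) :
    cycleWeight v (a ++ q :: b ++ q' :: c) =
      cycleWeight v (q :: b) + cycleWeight v (q' :: (c ++ a)) := by
  rw [cycleWeight, ((cycleArcs_perm_of_snd_eq h a b c).map _).sum_eq, List.map_append,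
    List.sum_append, cycleWeight, cycleWeight]

theorem cycleArcs_ofFn {c : ℕ} (f : Fin (c + 1) → ι × M) :
    cycleArcs (List.ofFn f) = List.ofFn fun ℓ => (f ℓ, (f (ℓ + 1)).2) := by
  refine List.ext_getElem (by simp [cycleArcs]) fun m h₁ h₂ => ?_
  simp only [cycleArcs, List.getElem_zip, List.getElem_rotate, List.getElem_map, List.getElem_ofFn]
  congr 3
  ext
  simp [Fin.val_add]

end Cycle

section Market

variable {ι M : Type*} [DecidableEq ι] [DecidableEq M] {O : ι → Finset M} {p : List (ι × M)}

theorem isExchange_cycleArcs (hp : ∀ e ∈ cycleArcs p, e.1.2 ∈ O e.1.1)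
    (hnd : (p.map Prod.snd).Nodup) :
    IsExchange O (cycleArcs p).toFinset (·.1.1) (·.1.2) (·.2) where
  src_mem e he := hp e (List.mem_toFinset.mp he)
  exists_src_eq_tgt e he := by
    have hmem : e.2 ∈ p.map Prod.snd := List.mem_rotate.mp <|
      map_snd_cycleArcs p ▸ List.mem_map_of_mem (List.mem_toFinset.mp he)
    obtain ⟨q, hq, hqe⟩ := List.mem_map.mp hmem
    obtain ⟨e', he', rfl⟩ := List.mem_map.mp (map_fst_cycleArcs p ▸ hq)
    exact ⟨e', List.mem_toFinset.mpr he', hqe⟩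
  injOn_src := by
    refine fun e he e' he' => List.inj_on_of_nodup_map (f := Prod.snd ∘ Prod.fst) ?_
      (List.mem_toFinset.mp he) (List.mem_toFinset.mp he')
    rwa [← List.map_map, map_fst_cycleArcs]
  injOn_tgt := by
    refine fun e he e' he' => List.inj_on_of_nodup_map ?_ (List.mem_toFinset.mp he)
      (List.mem_toFinset.mp he')
    rwa [map_snd_cycleArcs, List.nodup_rotate]

variable [Fintype ι] {v : ι → Finset M → ℝ} {k : ι → ℕ}

theorem exists_isAlloc_sw_eq_sub_cycleWeight (hmd : ∀ j, MultiDemand (v j) (k j))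
    (hO : IsAlloc O) (hcard : ∀ j, (O j).card = k j)
    (hp : ∀ e ∈ cycleArcs p, e.1.2 ∈ O e.1.1)
    (hnd : (p.map Prod.snd).Nodup) :
    ∃ A, IsAlloc A ∧ SW v A = SW v O - cycleWeight v p ∧
      ∀ e ∈ cycleArcs p, e.2 ∈ A e.1.1 := by
  have hE := isExchange_cycleArcs hp hnd
  refine ⟨_, hE.isAlloc_reassign hO, ?_, fun e he => ?_⟩
  · rw [hE.sw_reassign hmd hO hcard, cycleWeight, List.sum_toFinset _ (nodup_cycleArcs hnd)]
  · exact mem_union_right _ <|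
      mem_image_of_mem _ (mem_filter.mpr ⟨List.mem_toFinset.mpr he, rfl⟩)

theorem cycleWeight_nonneg (hmd : ∀ j, MultiDemand (v j) (k j)) (hO : IsOptimalAlloc v O)
    (hcard : ∀ j, (O j).card = k j) (p : List (ι × M))
    (hp : ∀ e ∈ cycleArcs p, e.1.2 ∈ O e.1.1) : 0 ≤ cycleWeight v p := by
  induction p using cycle_induction with
  | nodup p hnd =>
    obtain ⟨A, hA, hSW, -⟩ := exists_isAlloc_sw_eq_sub_cycleWeight hmd hO.1 hcard hp hnd
    linarith [hO.2 A hA]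
  | split a q b q' c hq ih₁ ih₂ =>
    have hperm := cycleArcs_perm_of_snd_eq hq a b c
    rw [cycleWeight_append_of_snd_eq v hq]
    exact add_nonneg (ih₁ fun e he => hp e (hperm.mem_iff.mpr (List.mem_append_left _ he)))
      (ih₂ fun e he => hp e (hperm.mem_iff.mpr (List.mem_append_right _ he)))

theorem legalItem_of_cycleWeight_eq_zero (hmd : ∀ j, MultiDemand (v j) (k j))
    (hO : IsOptimalAlloc v O) (hcard : ∀ j, (O j).card = k j) (p : List (ι × M))
    (hp : ∀ e ∈ cycleArcs p, e.1.2 ∈ O e.1.1) (h0 : cycleWeight v p = 0) :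
    ∀ e ∈ cycleArcs p, LegalItem v e.1.1 e.2 := by
  induction p using cycle_induction with
  | nodup p hnd =>
    obtain ⟨A, hA, hSW, hmem⟩ := exists_isAlloc_sw_eq_sub_cycleWeight hmd hO.1 hcard hp hnd
    exact fun e he => ⟨A, hO.of_sw_eq hA (by rw [hSW, h0, sub_zero]), hmem e he⟩
  | split a q b q' c hq ih₁ ih₂ =>
    have hperm := cycleArcs_perm_of_snd_eq hq a b c
    have hp₁ : ∀ e ∈ cycleArcs (q :: b), e.1.2 ∈ O e.1.1 :=
      fun e he => hp e (hperm.mem_iff.mpr (List.mem_append_left _ he))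
    have hp₂ : ∀ e ∈ cycleArcs (q' :: (c ++ a)), e.1.2 ∈ O e.1.1 :=
      fun e he => hp e (hperm.mem_iff.mpr (List.mem_append_right _ he))
    have hw₁ := cycleWeight_nonneg hmd hO hcard _ hp₁
    have hw₂ := cycleWeight_nonneg hmd hO hcard _ hp₂
    rw [cycleWeight_append_of_snd_eq v hq] at h0
    intro e he
    rcases List.mem_append.mp (hperm.mem_iff.mp he) with he | he
    · exact ih₁ hp₁ (by linarith) e he
    · exact ih₂ hp₂ (by linarith) e he

end Market

theorem zero_weight_cycle_gives_legal_general
    {M : Type*} {n : ℕ}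
    (v : Fin n → Finset M → ℝ) (k : Fin n → ℕ)
    (hmd : ∀ i, MultiDemand (v i) (k i))
    (hopt : ∀ A : Fin n → Finset M, IsOptimalAlloc v A →
      (∀ x : M, ∃ i, x ∈ A i) ∧ ∀ i, (A i).card = k i)
    (O : Fin n → Finset M) (hO : IsOptimalAlloc v O)
    {c : ℕ} (i : Fin (c + 1) → Fin n) (x : Fin (c + 1) → M)
    (hxO : ∀ ℓ, x ℓ ∈ O (i ℓ))
    (hsum : ∑ ℓ : Fin (c + 1), (v (i ℓ) {x ℓ} - v (i ℓ) {x (ℓ + 1)}) = 0) :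
    ∀ ℓ : Fin (c + 1), LegalItem v (i ℓ) (x (ℓ + 1)) := by
  classical
  have harcs := cycleArcs_ofFn fun ℓ => (i ℓ, x ℓ)
  have hp : ∀ e ∈ cycleArcs (List.ofFn fun ℓ => (i ℓ, x ℓ)), e.1.2 ∈ O e.1.1 := by
    rw [harcs]
    exact List.forall_mem_ofFn_iff.mpr hxO
  have h0 : cycleWeight v (List.ofFn fun ℓ => (i ℓ, x ℓ)) = 0 := by
    rwa [cycleWeight, harcs, List.map_ofFn, List.sum_ofFn]
  intro ℓ
  exact legalItem_of_cycleWeight_eq_zero hmd hO (hopt O hO).2 _ hp h0 _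
    (harcs ▸ List.mem_ofFn.mpr ⟨ℓ, rfl⟩)

/-- If a cycle in the preference graph has weight 0, then every
item `x (ℓ+1)` is legal for buyer `i ℓ`. -/
theorem zero_weight_cycle_gives_legal
    {M : Type*} [Fintype M] [DecidableEq M] {n : ℕ}
    (v : Fin n → Finset M → ℝ) (k : Fin n → ℕ)
    (hmono : ∀ i, MonotoneVal (v i)) (hnorm : ∀ i, v i ∅ = 0)
    (hmd : ∀ i, MultiDemand (v i) (k i))
    (hcard : Fintype.card M = ∑ i, k i)
    (hopt : ∀ A : Fin n → Finset M, IsOptimalAlloc v A →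
      (∀ x : M, ∃ i, x ∈ A i) ∧ ∀ i, (A i).card = k i)
    (O : Fin n → Finset M) (hO : IsOptimalAlloc v O)
    {c : ℕ} (i : Fin (c + 1) → Fin n) (x : Fin (c + 1) → M)
    (hxO : ∀ ℓ, x ℓ ∈ O (i ℓ))
    (hne : ∀ ℓ : Fin (c + 1), i ℓ ≠ i (ℓ + 1))
    (hsum : ∑ ℓ : Fin (c + 1), (v (i ℓ) {x ℓ} - v (i ℓ) {x (ℓ + 1)}) = 0) :
    ∀ ℓ : Fin (c + 1), LegalItem v (i ℓ) (x (ℓ + 1)) :=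
  zero_weight_cycle_gives_legal_general v k hmd hopt O hO i x hxO hsum
end
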